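/- arXiv:2501.00108 — 5 statements merged into one kernel-verified Lean document; each statement's English description precedes it below -/
import Mathlib

section
/- Let C be a set of signed sets satisfying the circuit axioms of an oriented matroid. For every circuit X in C, the signed incidence vector v_X (with entries +1 on X⁺, -1 on X⁻, 0 elsewhere) is a vertex (extreme point) of the polytope P = conv{v_Y : Y ∈ C}; in fact, v_X is the unique point of P maximizing the linear functional x ↦ v_X · x. -/
/-- The signed incidence vector of a signed set `(Xp, Xm)` on ground set `Fin n`. -/
noncomputable def signedIncidence {n : ℕ} (Xp Xm : Finset (Fin n)) : Fin n → ℝ :=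
  fun j => if j ∈ Xp then 1 else if j ∈ Xm then -1 else 0

/-- for a collection `C` of signed sets satisfying the oriented-matroid circuit
axioms, the signed incidence vector of every circuit is a vertex (extreme point) of the OMC
polytope, and is the unique maximizer over the polytope of the linear functional given by
dot product with itself. -/
theorem omc_circuit_vectors_are_vertices {n : ℕ}
    (C : Set (Finset (Fin n) × Finset (Fin n)))
    -- signed sets: the positive and negative parts are disjoint
    (hdisj : ∀ X ∈ C, Disjoint X.1 X.2)
    -- (C0)
    (hC0 : (∅, ∅) ∉ C)
    -- (C1)
    (hC1 : ∀ X ∈ C, (X.2, X.1) ∈ C)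
    -- (C2)
    (hC2 : ∀ X ∈ C, ∀ Y ∈ C, X.1 ∪ X.2 ⊆ Y.1 ∪ Y.2 → X = Y ∨ X = (Y.2, Y.1))
    -- (C3) circuit elimination
    (hC3 : ∀ X ∈ C, ∀ Y ∈ C, X ≠ (Y.2, Y.1) → ∀ e ∈ X.1 ∩ Y.2,
      ∃ Z ∈ C, Z.1 ⊆ (X.1 ∪ Y.1) \ {e} ∧ Z.2 ⊆ (X.2 ∪ Y.2) \ {e})
    (X : Finset (Fin n) × Finset (Fin n)) (hX : X ∈ C) :
    (∀ y ∈ convexHull ℝ {v | ∃ Y ∈ C, v = signedIncidence Y.1 Y.2},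
        (∑ j, signedIncidence X.1 X.2 j * y j) ≤
          ∑ j, signedIncidence X.1 X.2 j * signedIncidence X.1 X.2 j ∧
        ((∑ j, signedIncidence X.1 X.2 j * y j) =
            (∑ j, signedIncidence X.1 X.2 j * signedIncidence X.1 X.2 j) →
          y = signedIncidence X.1 X.2)) ∧
      signedIncidence X.1 X.2 ∈
        Set.extremePoints ℝ (convexHull ℝ {v | ∃ Y ∈ C, v = signedIncidence Y.1 Y.2}) := by
  
  classical
  set v : Fin n → ℝ := signedIncidence X.1 X.2 with hv
  set f : (Fin n → ℝ) → ℝ := fun y => ∑ j, v j * y j with hf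
  set M : ℝ := ∑ j, v j * v j with hM
  have hlin : ∀ (a b : ℝ) (y1 y2 : Fin n → ℝ),
      f (a • y1 + b • y2) = a * f y1 + b * f y2 := by
    intro a b y1 y2
    simp only [hf, Pi.add_apply, Pi.smul_apply, smul_eq_mul, mul_add,
      Finset.sum_add_distrib, Finset.mul_sum]
    congr 1 <;> exact Finset.sum_congr rfl (fun j _ => by ring)
  -- key lemma about generators
  have key : ∀ Y ∈ C, f (signedIncidence Y.1 Y.2) ≤ M ∧
      (f (signedIncidence Y.1 Y.2) = M → signedIncidence Y.1 Y.2 = v) := by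
    intro Y hY
    set w : Fin n → ℝ := signedIncidence Y.1 Y.2 with hw
    have hpt : ∀ j, v j * w j ≤ v j * v j := by
      intro j
      simp only [hv, hw, signedIncidence]
      split_ifs <;> norm_num
    have hle : f w ≤ M := Finset.sum_le_sum (fun j _ => hpt j)
    refine ⟨hle, fun heq => ?_⟩
    have heach : ∀ j ∈ Finset.univ, v j * w j = v j * v j :=
      (Finset.sum_eq_sum_iff_of_le (fun j _ => hpt j)).mp heq
    have h1 : X.1 ⊆ Y.1 := by
      intro j hj
      have hvj : v j = 1 := by simp [hv, signedIncidence, hj]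
      have hwj : w j = 1 := by
        have h := heach j (Finset.mem_univ j)
        rw [hvj] at h; linarith
      by_contra hc
      by_cases hy2 : j ∈ Y.2
      · simp [hw, signedIncidence, hc, hy2] at hwj; linarith
      · simp [hw, signedIncidence, hc, hy2] at hwj
    have h2 : X.2 ⊆ Y.2 := by
      intro j hj
      have hj1 : j ∉ X.1 := fun h1' => Finset.disjoint_left.mp (hdisj X hX) h1' hj
      have hvj : v j = -1 := by simp [hv, signedIncidence, hj, hj1]
      have hwj : w j = -1 := by
        have h := heach j (Finset.mem_univ j)
        rw [hvj] at h; linarith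
      by_contra hc
      by_cases hy1 : j ∈ Y.1
      · simp [hw, signedIncidence, hy1] at hwj; linarith
      · simp [hw, signedIncidence, hy1, hc] at hwj
    have hsub : X.1 ∪ X.2 ⊆ Y.1 ∪ Y.2 := Finset.union_subset_union h1 h2
    rcases hC2 X hX Y hY hsub with rfl | hXY
    · rfl
    · exfalso
      have e1 : X.1 = Y.2 := congrArg Prod.fst hXY
      have e2 : X.2 = Y.1 := congrArg Prod.snd hXY
      have hY2 : Y.2 = ∅ := (hdisj Y hY).symm.eq_bot_of_le (e1 ▸ h1)
      have hY1 : Y.1 = ∅ := by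
        have h' := e2 ▸ h2
        rw [hY2] at h'
        exact Finset.subset_empty.mp h'
      have : Y = (∅, ∅) := Prod.ext hY1 hY2
      exact hC0 (this ▸ hY)
  set S : Set (Fin n → ℝ) := {v | ∃ Y ∈ C, v = signedIncidence Y.1 Y.2} with hS
  set T : Set (Fin n → ℝ) := {y | f y ≤ M ∧ (f y = M → y = v)} with hT
  have hST : S ⊆ T := by
    rintro _ ⟨Y, hY, rfl⟩
    exact key Y hY
  -- extracting equality of each functional value from an equal convex combination
  have hsplit : ∀ (a b : ℝ) (y1 y2 : Fin n → ℝ), 0 < a → 0 < b → a + b = 1 →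
      f y1 ≤ M → f y2 ≤ M → a * f y1 + b * f y2 = M → f y1 = M ∧ f y2 = M := by
    intro a b y1 y2 ha hb hab hy1 hy2 heq
    have habM : a * M + b * M = M := by rw [← add_mul, hab, one_mul]
    have k1 : a * M ≤ a * f y1 := by
      have := mul_le_mul_of_nonneg_left hy2 hb.le
      linarith
    have k2 : b * M ≤ b * f y2 := by
      have := mul_le_mul_of_nonneg_left hy1 ha.le
      linarith
    exact ⟨le_antisymm hy1 ((mul_le_mul_iff_right₀ ha).mp k1),
      le_antisymm hy2 ((mul_le_mul_iff_right₀ hb).mp k2)⟩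
  have hTconv : Convex ℝ T := by
    rintro y1 ⟨hy1, hy1'⟩ y2 ⟨hy2, hy2'⟩ a b ha hb hab
    have hfval := hlin a b y1 y2
    constructor
    · rw [hfval]
      calc a * f y1 + b * f y2 ≤ a * M + b * M :=
            add_le_add (mul_le_mul_of_nonneg_left hy1 ha) (mul_le_mul_of_nonneg_left hy2 hb)
        _ = M := by rw [← add_mul, hab, one_mul]
    · intro heq
      rw [hfval] at heq
      rcases ha.lt_or_eq with ha' | ha'
      · rcases hb.lt_or_eq with hb' | hb'
        · obtain ⟨k1, k2⟩ := hsplit a b y1 y2 ha' hb' hab hy1 hy2 heq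
          rw [hy1' k1, hy2' k2, ← add_smul, hab, one_smul]
        · have ha1 : a = 1 := by linarith
          have hfy1 : f y1 = M := by rw [ha1, ← hb'] at heq; linarith
          rw [hy1' hfy1, ha1, ← hb', one_smul, zero_smul, add_zero]
      · have hb1 : b = 1 := by linarith
        have hfy2 : f y2 = M := by rw [hb1, ← ha'] at heq; linarith
        rw [hy2' hfy2, hb1, ← ha', one_smul, zero_smul, zero_add]
  have hhullT : convexHull ℝ S ⊆ T := convexHull_min hST hTconv
  have hmem : v ∈ convexHull ℝ S := subset_convexHull ℝ S ⟨X, hX, rfl⟩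
  have hfv : f v = M := rfl
  constructor
  · intro y hy
    exact hhullT hy
  · refine ⟨hmem, ?_⟩
    rintro x1 hx1 x2 hx2 ⟨a, b, ha, hb, hab, habv⟩
    have h1 := hhullT hx1
    have h2 := hhullT hx2
    have heq : a * f x1 + b * f x2 = M := by rw [← hlin, habv, hfv]
    obtain ⟨k1, k2⟩ := hsplit a b x1 x2 ha hb hab h1.1 h2.1 heq
    exact h1.2 k1
end

section
/- Let G = (V,E) be a finite graph with k connected components and G̃ an orientation of G. The OMC polytope of the dual (cographical) oriented matroid M*(G̃), namely the convex hull in ℝ^E of the signed incidence vectors of all signed cocircuits (arising from minimal cuts of G), has dimension |V| - k. -/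
open SimpleGraph

/-- The graph obtained from `G` by deleting all edges between `A` and its complement. -/
def cutGraph {V : Type*} (G : SimpleGraph V) (A : Finset V) : SimpleGraph V where
  Adj x y := G.Adj x y ∧ (x ∈ A ↔ y ∈ A)
  symm := ⟨fun x y h => ⟨h.1.symm, h.2.symm⟩⟩
  loopless := ⟨fun x h => G.loopless.irrefl x h.1⟩

instance {V : Type*} (G : SimpleGraph V) [DecidableRel G.Adj] (A : Finset V) [DecidableEq V] :
    DecidableRel (cutGraph G A).Adj := fun x y => inferInstanceAs (Decidable (G.Adj x y ∧ (x ∈ A ↔ y ∈ A)))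

/-- The signed incidence vector of the cocircuit of `M*(G̃)` coming from the cut
`V = A ⊔ Aᶜ`: an edge oriented from `A` to `Aᶜ` gets `+1`, one oriented from `Aᶜ` to `A`
gets `-1`, and edges within a part get `0`. -/
noncomputable def cocircuitVec {V : Type*} [DecidableEq V] {G : SimpleGraph V}
    (o : G.edgeSet → V × V) (A : Finset V) : G.edgeSet → ℝ :=
  fun e => if (o e).1 ∈ A ∧ (o e).2 ∉ A then 1
    else if (o e).1 ∉ A ∧ (o e).2 ∈ A then -1 else 0

namespace OMCAux
variable {V : Type*} [Fintype V] [DecidableEq V] {G : SimpleGraph V} [DecidableRel G.Adj]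

lemma cutGraph_adj {A : Finset V} {x y : V} :
    (cutGraph G A).Adj x y ↔ G.Adj x y ∧ (x ∈ A ↔ y ∈ A) := Iff.rfl

lemma cocircuitVec_apply (o : G.edgeSet → V × V) (A : Finset V) (e : G.edgeSet) :
    cocircuitVec o A e =
      (if (o e).1 ∈ A then (1:ℝ) else 0) - (if (o e).2 ∈ A then (1:ℝ) else 0) := by
  by_cases h1 : (o e).1 ∈ A <;> by_cases h2 : (o e).2 ∈ A <;>
    simp [cocircuitVec, h1, h2]

lemma cutGraph_le (A : Finset V) : cutGraph G A ≤ G := fun _ _ h => h.1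

lemma reach_mem {A : Finset V} {x y : V} (h : (cutGraph G A).Reachable x y) :
    x ∈ A ↔ y ∈ A := by
  obtain ⟨w⟩ := h
  induction w with
  | nil => exact Iff.rfl
  | cons h _ ih => exact h.2.trans ih

lemma card_cc_lt {H H' : SimpleGraph V} [DecidableRel H.Adj] [DecidableRel H'.Adj]
    (hle : H ≤ H') {x y : V} (hxy : H'.Adj x y)
    (hne : H.connectedComponentMk x ≠ H.connectedComponentMk y) :
    Fintype.card H'.ConnectedComponent < Fintype.card H.ConnectedComponent := by
  apply Fintype.card_lt_of_surjective_not_injective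
      (SimpleGraph.ConnectedComponent.map (SimpleGraph.Hom.ofLE hle))
  · intro c
    exact c.ind fun w => ⟨H.connectedComponentMk w, rfl⟩
  · intro hinj
    apply hne
    apply hinj
    show H'.connectedComponentMk x = H'.connectedComponentMk y
    exact ConnectedComponent.sound hxy.reachable

lemma split_step (o : G.edgeSet → V × V) {A : Finset V} {u0 v0 x1 y1 : V}
    (h0 : G.Adj u0 v0) (hu0 : u0 ∈ A) (hv0 : v0 ∉ A)
    (h1 : G.Adj x1 y1) (hx1 : x1 ∈ A) (hy1 : y1 ∉ A)
    (hnr : ¬ (cutGraph G A).Reachable u0 x1) :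
    ∃ C D : Finset V,
      cocircuitVec o A = cocircuitVec o C + cocircuitVec o D ∧
      Fintype.card (cutGraph G C).ConnectedComponent
        < Fintype.card (cutGraph G A).ConnectedComponent ∧
      Fintype.card (cutGraph G D).ConnectedComponent
        < Fintype.card (cutGraph G A).ConnectedComponent := by
  classical
  set C : Finset V := Finset.univ.filter (fun x => (cutGraph G A).Reachable u0 x) with hC
  have hmemC : ∀ {x : V}, x ∈ C ↔ (cutGraph G A).Reachable u0 x := by
    intro x; simp [hC]
  have hCA : ∀ {x : V}, x ∈ C → x ∈ A := fun hx => (reach_mem (hmemC.mp hx)).mp hu0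
  refine ⟨C, A \ C, ?_, ?_, ?_⟩
  · funext e
    rw [Pi.add_apply, cocircuitVec_apply, cocircuitVec_apply, cocircuitVec_apply]
    have key : ∀ t : V, (if t ∈ A then (1:ℝ) else 0)
        = (if t ∈ C then 1 else 0) + (if t ∈ A \ C then 1 else 0) := by
      intro t
      by_cases ht1 : t ∈ C
      · rw [if_pos (hCA ht1), if_pos ht1, if_neg (by simp [Finset.mem_sdiff, ht1])]; ring
      · by_cases ht2 : t ∈ A
        · rw [if_pos ht2, if_neg ht1, if_pos (Finset.mem_sdiff.mpr ⟨ht2, ht1⟩)]; ring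
        · rw [if_neg ht2, if_neg ht1, if_neg (by simp [Finset.mem_sdiff, ht2])]; ring
    rw [key, key]; ring
  · refine card_cc_lt (fun x y hxy => ⟨hxy.1, ?_⟩) (x := x1) (y := y1) ?_ ?_
    · exact ⟨fun h => hmemC.mpr ((hmemC.mp h).trans hxy.reachable),
        fun h => hmemC.mpr ((hmemC.mp h).trans hxy.reachable.symm)⟩
    · exact ⟨h1, by
        have hx1C : x1 ∉ C := fun h => hnr (hmemC.mp h)
        have hy1C : y1 ∉ C := fun h => hy1 (hCA h)
        simp [hx1C, hy1C]⟩
    · intro h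
      exact hy1 ((reach_mem (ConnectedComponent.exact h)).mp hx1)
  · refine card_cc_lt (fun x y hxy => ⟨hxy.1, ?_⟩) (x := u0) (y := v0) ?_ ?_
    · have hiffC : x ∈ C ↔ y ∈ C := by
        exact ⟨fun h => hmemC.mpr ((hmemC.mp h).trans hxy.reachable),
          fun h => hmemC.mpr ((hmemC.mp h).trans hxy.reachable.symm)⟩
      have hiffA : x ∈ A ↔ y ∈ A := hxy.2
      simp only [Finset.mem_sdiff]; tauto
    · exact ⟨h0, by
        have hu0C : u0 ∈ C := hmemC.mpr (Reachable.refl u0)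
        simp [Finset.mem_sdiff, hu0C, hv0]⟩
    · intro h
      exact hv0 ((reach_mem (ConnectedComponent.exact h)).mp hu0)


variable (G) in
def SSet (o : G.edgeSet → V × V) : Set (G.edgeSet → ℝ) :=
  {v : G.edgeSet → ℝ | ∃ A : Finset V,
    Fintype.card (cutGraph G A).ConnectedComponent
      = Fintype.card G.ConnectedComponent + 1 ∧
    v = cocircuitVec o A}

lemma cutGraph_compl (A : Finset V) : cutGraph G Aᶜ = cutGraph G A := by
  ext x y
  rw [cutGraph_adj, cutGraph_adj]
  simp only [Finset.mem_compl]
  tauto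

lemma cocircuitVec_compl (o : G.edgeSet → V × V) (A : Finset V) :
    cocircuitVec o Aᶜ = -cocircuitVec o A := by
  funext e
  rw [Pi.neg_apply, cocircuitVec_apply, cocircuitVec_apply]
  by_cases h1 : (o e).1 ∈ A <;> by_cases h2 : (o e).2 ∈ A <;>
    simp [Finset.mem_compl, h1, h2]

lemma card_cc_congr {H H' : SimpleGraph V}
    [Fintype H.ConnectedComponent] [Fintype H'.ConnectedComponent] (h : H = H') :
    Fintype.card H.ConnectedComponent = Fintype.card H'.ConnectedComponent :=
  Fintype.card_congr (Equiv.cast (by rw [h]))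

lemma chi_mem_span (o : G.edgeSet → V × V)
    (hadj : ∀ e : G.edgeSet, G.Adj (o e).1 (o e).2) :
    ∀ (n : ℕ) (A : Finset V), Fintype.card (cutGraph G A).ConnectedComponent = n →
      cocircuitVec o A ∈ Submodule.span ℝ (SSet G o) := by
  classical
  intro n
  induction n using Nat.strong_induction_on with
  | _ n ih =>
    intro A hA
    by_cases hcross : ∀ x y : V, G.Adj x y → x ∈ A → y ∈ A
    · -- no crossing edges: the vector is zero
      have hz : cocircuitVec o A = 0 := by
        funext e
        rw [cocircuitVec_apply]
        by_cases h : (o e).1 ∈ A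
        · rw [if_pos h, if_pos (hcross _ _ (hadj e) h)]; simp
        · have h2 : (o e).2 ∉ A := fun hh => h (hcross _ _ (hadj e).symm hh)
          rw [if_neg h, if_neg h2]; simp
      rw [hz]; exact Submodule.zero_mem _
    · push_neg at hcross
      obtain ⟨u0, v0, h0, hu0, hv0⟩ := hcross
      by_cases hcase1 : ∃ x y : V, G.Adj x y ∧ x ∈ A ∧ y ∉ A ∧
          ¬ (cutGraph G A).Reachable u0 x
      · obtain ⟨x1, y1, h1, hx1, hy1, hnr⟩ := hcase1
        obtain ⟨C, D, hsum, hltC, hltD⟩ := split_step o h0 hu0 hv0 h1 hx1 hy1 hnr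
        rw [hsum]
        exact Submodule.add_mem _
          (ih _ (lt_of_lt_of_eq hltC hA) C rfl)
          (ih _ (lt_of_lt_of_eq hltD hA) D rfl)
      by_cases hcase2 : ∃ x y : V, G.Adj x y ∧ x ∈ A ∧ y ∉ A ∧
          ¬ (cutGraph G A).Reachable v0 y
      · obtain ⟨x1, y1, h1, hx1, hy1, hnr⟩ := hcase2
        -- work with the complement
        have hu0' : v0 ∈ Aᶜ := Finset.mem_compl.mpr hv0
        have hv0' : u0 ∉ Aᶜ := by simp [Finset.mem_compl, hu0]
        have hx1' : y1 ∈ Aᶜ := Finset.mem_compl.mpr hy1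
        have hy1' : x1 ∉ Aᶜ := by simp [Finset.mem_compl, hx1]
        have hnr' : ¬ (cutGraph G Aᶜ).Reachable v0 y1 := by
          rw [cutGraph_compl]; exact hnr
        obtain ⟨C, D, hsum, hltC, hltD⟩ :=
          split_step o h0.symm hu0' hv0' h1.symm hx1' hy1' hnr'
        have hcardc : Fintype.card (cutGraph G Aᶜ).ConnectedComponent = n :=
          (card_cc_congr (cutGraph_compl A)).trans hA
        have hAval : cocircuitVec o A = -(cocircuitVec o C + cocircuitVec o D) := by
          have h := cocircuitVec_compl o Aᶜ
          rw [compl_compl] at h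
          rw [h, hsum]
        rw [hAval]
        exact Submodule.neg_mem _ (Submodule.add_mem _
          (ih _ (lt_of_lt_of_eq hltC hcardc) C rfl)
          (ih _ (lt_of_lt_of_eq hltD hcardc) D rfl))
      · -- bond case
        push_neg at hcase1 hcase2
        set H := cutGraph G A with hH
        have hu0v0 : H.connectedComponentMk u0 ≠ H.connectedComponentMk v0 :=
          fun h => hv0 ((reach_mem (ConnectedComponent.exact h)).mp hu0)
        let π : H.ConnectedComponent → G.ConnectedComponent :=
          SimpleGraph.ConnectedComponent.map
            (SimpleGraph.Hom.ofLE (cutGraph_le A))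
        have hπ : ∀ v : V, π (H.connectedComponentMk v) = G.connectedComponentMk v :=
          fun v => rfl
        have key : ∀ {a b : V}, G.Adj a b →
            H.connectedComponentMk a = H.connectedComponentMk b ∨
            ((H.connectedComponentMk a = H.connectedComponentMk u0 ∨
              H.connectedComponentMk a = H.connectedComponentMk v0) ∧
             (H.connectedComponentMk b = H.connectedComponentMk u0 ∨
              H.connectedComponentMk b = H.connectedComponentMk v0)) := by
          intro a b hab
          by_cases hmem : a ∈ A ↔ b ∈ A
          · exact Or.inl (ConnectedComponent.sound (Adj.reachable ⟨hab, hmem⟩))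
          · by_cases ha : a ∈ A
            · have hb : b ∉ A := fun hb => hmem ⟨fun _ => hb, fun _ => ha⟩
              refine Or.inr ⟨Or.inl ?_, Or.inr ?_⟩
              · exact (ConnectedComponent.sound (hcase1 a b hab ha hb)).symm
              · exact (ConnectedComponent.sound (hcase2 a b hab ha hb)).symm
            · have hb : b ∈ A := by
                by_contra hb
                exact hmem ⟨fun h => absurd h ha, fun h => absurd h hb⟩
              refine Or.inr ⟨Or.inr ?_, Or.inl ?_⟩
              · exact (ConnectedComponent.sound (hcase2 b a hab.symm hb ha)).symm
              · exact (ConnectedComponent.sound (hcase1 b a hab.symm hb ha)).symm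
        have key2 : ∀ (a b : V), G.Walk a b →
            (H.connectedComponentMk a = H.connectedComponentMk b ∨
            ((H.connectedComponentMk a = H.connectedComponentMk u0 ∨
              H.connectedComponentMk a = H.connectedComponentMk v0) ∧
             (H.connectedComponentMk b = H.connectedComponentMk u0 ∨
              H.connectedComponentMk b = H.connectedComponentMk v0))) := by
          intro a b w
          induction w with
          | nil => exact Or.inl rfl
          | cons hadj' p ih' =>
            rcases key hadj' with h1 | h1 <;> rcases ih' with h2 | h2
            · exact Or.inl (h1.trans h2)
            · exact Or.inr ⟨h1 ▸ h2.1, h2.2⟩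
            · exact Or.inr ⟨h1.1, h2 ▸ h1.2⟩
            · exact Or.inr ⟨h1.1, h2.2⟩
        let f : H.ConnectedComponent → Option G.ConnectedComponent := fun c =>
          if c = H.connectedComponentMk v0 then none else some (π c)
        have hinj : Function.Injective f := by
          intro c1 c2 hfc
          by_cases e1 : c1 = H.connectedComponentMk v0 <;>
            by_cases e2 : c2 = H.connectedComponentMk v0
          · exact e1.trans e2.symm
          · simp only [f, if_pos e1, if_neg e2] at hfc
            exact absurd hfc (by simp)
          · simp only [f, if_pos e2, if_neg e1] at hfc
            exact absurd hfc (by simp)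
          · simp only [f, if_neg e1, if_neg e2, Option.some.injEq] at hfc
            obtain ⟨w1, rfl⟩ := Quot.exists_rep c1
            obtain ⟨w2, rfl⟩ := Quot.exists_rep c2
            have hreach : G.Reachable w1 w2 := ConnectedComponent.exact hfc
            obtain ⟨w⟩ := hreach
            rcases key2 w1 w2 w with h | ⟨ha, hb⟩
            · exact h
            · rcases ha with ha | ha
              · rcases hb with hb | hb
                · exact ha.trans hb.symm
                · exact absurd hb e2
              · exact absurd ha e1
        have hsurj : Function.Surjective f := by
          intro oc
          rcases oc with _ | d
          · exact ⟨H.connectedComponentMk v0, by simp [f]⟩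
          · obtain ⟨w, rfl⟩ := Quot.exists_rep d
            by_cases hw : H.connectedComponentMk w = H.connectedComponentMk v0
            · refine ⟨H.connectedComponentMk u0, ?_⟩
              have : G.connectedComponentMk u0 = G.connectedComponentMk w := by
                refine ConnectedComponent.sound ?_
                exact h0.reachable.trans
                  ((ConnectedComponent.exact hw).mono (cutGraph_le A)).symm
              simp only [f, if_neg hu0v0, hπ, this]
              rfl
            · exact ⟨H.connectedComponentMk w, by simp only [f, if_neg hw]; rfl⟩
        have hcard : Fintype.card H.ConnectedComponent
            = Fintype.card G.ConnectedComponent + 1 := by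
          have := Fintype.card_congr (Equiv.ofBijective f ⟨hinj, hsurj⟩)
          rwa [Fintype.card_option] at this
        exact Submodule.subset_span ⟨A, hcard, rfl⟩


variable (G) in
noncomputable def Lmap (o : G.edgeSet → V × V) : (V → ℝ) →ₗ[ℝ] (G.edgeSet → ℝ) where
  toFun f := fun e => f (o e).1 - f (o e).2
  map_add' f g := by funext e; simp only [Pi.add_apply]; ring
  map_smul' c f := by funext e; simp only [Pi.smul_apply, smul_eq_mul, RingHom.id_apply]; ring

lemma cocircuit_eq_Lmap (o : G.edgeSet → V × V) (A : Finset V) :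
    cocircuitVec o A = Lmap G o (fun x => if x ∈ A then (1:ℝ) else 0) := by
  funext e; rw [cocircuitVec_apply]; rfl

lemma Lmap_eq_sum (o : G.edgeSet → V × V) (f : V → ℝ) :
    Lmap G o f = ∑ x : V, f x • cocircuitVec o ({x} : Finset V) := by
  funext e
  rw [Finset.sum_apply]
  show f (o e).1 - f (o e).2 = _
  simp only [Pi.smul_apply, cocircuitVec_apply, Finset.mem_singleton, smul_eq_mul,
    mul_sub, Finset.sum_sub_distrib, mul_ite, mul_one, mul_zero, Finset.sum_ite_eq,
    Finset.mem_univ, if_true]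

variable (G) in
noncomputable def Jmap : (G.ConnectedComponent → ℝ) →ₗ[ℝ] (V → ℝ) where
  toFun c := fun v => c (G.connectedComponentMk v)
  map_add' _ _ := rfl
  map_smul' _ _ := rfl

end OMCAux

/-- the OMC polytope of the cographical oriented matroid `M*(G̃)` of an oriented
finite graph `G = (V, E)` with `k` connected components has dimension `|V| - k`
(stated additively to avoid truncated subtraction). -/
theorem omc_cographical_dim {V : Type*} [Fintype V] [DecidableEq V]
    (G : SimpleGraph V) [DecidableRel G.Adj]
    (o : G.edgeSet → V × V) (ho : ∀ e : G.edgeSet, Sym2.mk (o e).1 (o e).2 = e.val) :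
    Module.finrank ℝ
        (affineSpan ℝ (convexHull ℝ
          {v : G.edgeSet → ℝ | ∃ A : Finset V,
            Fintype.card (cutGraph G A).ConnectedComponent
              = Fintype.card G.ConnectedComponent + 1 ∧
            v = cocircuitVec o A})).direction
      + Fintype.card G.ConnectedComponent
      = Fintype.card V := by
  classical
  have hadj : ∀ e : G.edgeSet, G.Adj (o e).1 (o e).2 := by
    intro e
    exact G.mem_edgeSet.mp (by rw [ho e]; exact e.2)
  set S : Set (G.edgeSet → ℝ) := {v : G.edgeSet → ℝ | ∃ A : Finset V,
      Fintype.card (cutGraph G A).ConnectedComponent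
        = Fintype.card G.ConnectedComponent + 1 ∧
      v = cocircuitVec o A} with hSdef
  rw [affineSpan_convexHull, direction_affineSpan]
  have hmem : ∀ A : Finset V, cocircuitVec o A ∈ Submodule.span ℝ S :=
    fun A => OMCAux.chi_mem_span o hadj _ A rfl
  have hneg : ∀ v ∈ S, -v ∈ S := by
    rintro v ⟨A, hcard, rfl⟩
    exact ⟨Aᶜ, (OMCAux.card_cc_congr (OMCAux.cutGraph_compl A)).trans hcard,
      (OMCAux.cocircuitVec_compl o A).symm⟩
  have hSsub : S ⊆ (vectorSpan ℝ S : Set (G.edgeSet → ℝ)) := by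
    intro v hv
    have h2 : (2⁻¹ : ℝ) • (v -ᵥ (-v)) = v := by
      rw [vsub_eq_sub, sub_neg_eq_add, ← two_smul ℝ v, smul_smul]
      norm_num
    exact h2 ▸ Submodule.smul_mem _ _ (vsub_mem_vectorSpan ℝ hv (hneg v hv))
  have hspan : vectorSpan ℝ S = LinearMap.range (OMCAux.Lmap G o) := by
    apply le_antisymm
    · rw [vectorSpan_def]
      refine Submodule.span_le.mpr ?_
      rintro z hz
      rw [Set.mem_vsub] at hz
      obtain ⟨v, hv, w, hw, rfl⟩ := hz
      obtain ⟨A, -, rfl⟩ := hv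
      obtain ⟨B, -, rfl⟩ := hw
      rw [vsub_eq_sub]
      exact Submodule.sub_mem _ ⟨_, (OMCAux.cocircuit_eq_Lmap o A).symm⟩
        ⟨_, (OMCAux.cocircuit_eq_Lmap o B).symm⟩
    · rintro _ ⟨f, rfl⟩
      rw [OMCAux.Lmap_eq_sum]
      refine Submodule.sum_mem _ fun x _ => Submodule.smul_mem _ _ ?_
      exact (Submodule.span_le.mpr hSsub) (hmem ({x} : Finset V))
  rw [hspan]
  have hrk := LinearMap.finrank_range_add_finrank_ker (OMCAux.Lmap G o)
  have hker : Module.finrank ℝ (LinearMap.ker (OMCAux.Lmap G o))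
      = Fintype.card G.ConnectedComponent := by
    have hJ : ∀ c, OMCAux.Jmap G c ∈ LinearMap.ker (OMCAux.Lmap G o) := by
      intro c
      rw [LinearMap.mem_ker]
      funext e
      show c (G.connectedComponentMk (o e).1) - c (G.connectedComponentMk (o e).2) = 0
      rw [SimpleGraph.ConnectedComponent.sound (hadj e).reachable, sub_self]
    let J' := LinearMap.codRestrict (LinearMap.ker (OMCAux.Lmap G o)) (OMCAux.Jmap G) hJ
    have hinj : Function.Injective J' := by
      intro c1 c2 h
      funext cc
      obtain ⟨v, rfl⟩ := Quot.exists_rep cc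
      exact congrFun (congrArg Subtype.val h) v
    have hsurj : Function.Surjective J' := by
      rintro ⟨f, hf⟩
      rw [LinearMap.mem_ker] at hf
      have hconst : ∀ a b : V, G.Adj a b → f a = f b := by
        intro a b hab
        set e : G.edgeSet := ⟨s(a,b), G.mem_edgeSet.mpr hab⟩ with he
        have h0 : f (o e).1 - f (o e).2 = 0 := congrFun hf e
        have h1 : Sym2.mk (o e).1 (o e).2 = s(a,b) := ho e
        rcases Sym2.eq_iff.mp h1 with ⟨ha, hb⟩ | ⟨ha, hb⟩
        · rw [← ha, ← hb]; exact sub_eq_zero.mp h0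
        · rw [← ha, ← hb]; exact (sub_eq_zero.mp h0).symm
      have hwalk : ∀ (a b : V) (p : G.Walk a b), f a = f b := by
        intro a b p
        induction p with
        | nil => rfl
        | cons h _ ih => exact (hconst _ _ h).trans ih
      refine ⟨SimpleGraph.ConnectedComponent.lift f (fun v w p _ => hwalk v w p), ?_⟩
      apply Subtype.ext
      funext v
      rfl
    have heq := (LinearEquiv.ofBijective J' ⟨hinj, hsurj⟩).finrank_eq
    rw [← heq, Module.finrank_fintype_fun_eq_card]
  have hV : Module.finrank ℝ (V → ℝ) = Fintype.card V :=
    Module.finrank_fintype_fun_eq_card ℝ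
  omega
end

section
/- The affine map φ: ℝ^{n-1} → ℝ^n given by φ(x) = (-x₁+1, x₁-x₂+1, ..., x_{n-2}-x_{n-1}+1, x_{n-1}+1) maps the zonotope Z(e₁, ..., e_{n-1}, -𝟙) bijectively onto the graphic zonotope Z_{C_n} = Σ_{j=1}^{n} [e_j, e_{j+1}] (indices mod n). -/
open Pointwise

/-- The affine map `φ(x) = (-x₁+1, x₁-x₂+1, …, x_{n-2}-x_{n-1}+1, x_{n-1}+1)`
from `ℝ^(n-1)` to `ℝ^n`, with `n = m+1`. -/
noncomputable def phiMap (m : ℕ) (x : Fin m → ℝ) : Fin (m + 1) → ℝ := fun j =>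
  (if h : (j : ℕ) < m then -x ⟨j, h⟩ else 0) +
    (if h2 : 0 < (j : ℕ) then x ⟨(j : ℕ) - 1, by have := j.isLt; omega⟩ else 0) + 1

lemma sum_smul_single (k : ℕ) (θ : Fin k → ℝ) :
    (∑ i, θ i • (Pi.single i 1 : Fin k → ℝ)) = θ := by
  funext j
  rw [Finset.sum_apply]
  simp only [Pi.smul_apply, Pi.single_apply, smul_eq_mul, mul_ite, mul_one, mul_zero]
  simp

lemma mem_segment_zero {k : ℕ} (v z : Fin k → ℝ) :
    z ∈ segment ℝ (0 : Fin k → ℝ) v ↔ ∃ θ ∈ Set.Icc (0:ℝ) 1, θ • v = z := by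
  rw [segment_eq_image]
  simp [Set.mem_image]

lemma val_sub_one (m : ℕ) (hm : 1 ≤ m) (k : Fin (m+1)) :
    ((k - 1 : Fin (m+1)) : ℕ) = if (k:ℕ) = 0 then m else (k:ℕ) - 1 := by
  have h1 : ((1 : Fin (m+1)) : ℕ) = 1 := by
    rw [Fin.val_one']; exact Nat.mod_eq_of_lt (by omega)
  rw [Fin.sub_def]
  simp only [h1]
  have hk := k.isLt
  by_cases h0 : (k:ℕ) = 0
  · rw [if_pos h0, h0]
    simp [Nat.mod_eq_of_lt]
  · rw [if_neg h0]
    have : (m + 1 - 1) + (k:ℕ) = ((k:ℕ) - 1) + (m+1) := by omega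
    rw [this, Nat.add_mod_right, Nat.mod_eq_of_lt (by omega)]

/-- The sum of segment points equals `φ` of the corresponding cube+segment point. -/
lemma keyB (m : ℕ) (hm : 1 ≤ m) (u : Fin (m+1) → ℝ) :
    (∑ j : Fin (m+1), ((1 - u j) • (Pi.single j 1 : Fin (m+1) → ℝ)
        + u j • (Pi.single (j+1) 1 : Fin (m+1) → ℝ)))
      = phiMap m (fun i => u i.castSucc - u (Fin.last m)) := by
  funext k
  have hsum : (∑ j : Fin (m+1), ((1 - u j) • (Pi.single j 1 : Fin (m+1) → ℝ)
        + u j • (Pi.single (j+1) 1 : Fin (m+1) → ℝ))) k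
      = (1 - u k) + u (k - 1) := by
    rw [Finset.sum_apply]
    simp only [Pi.add_apply, Pi.smul_apply, Pi.single_apply, smul_eq_mul, mul_ite, mul_one,
      mul_zero]
    rw [Finset.sum_add_distrib]
    congr 1
    · simp
    · have : ∀ j : Fin (m+1), (if k = j + 1 then u j else 0) = (if k - 1 = j then u j else 0) := by
        intro j
        congr 1
        simp only [eq_iff_iff, sub_eq_iff_eq_add]
      rw [Finset.sum_congr rfl (fun j _ => this j)]
      simp
  rw [hsum]
  have hk1 := val_sub_one m hm k
  have hk := k.isLt
  unfold phiMap
  by_cases h0 : (k:ℕ) = 0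
  · have hkm : (k:ℕ) < m := by omega
    rw [dif_pos hkm, dif_neg (by omega)]
    have e1 : k - 1 = Fin.last m := by
      apply Fin.ext; rw [hk1, if_pos h0]; rfl
    have e2 : ((⟨(k:ℕ), hkm⟩ : Fin m)).castSucc = k := by
      apply Fin.ext; rfl
    simp only [e1, e2]
    ring
  · by_cases hkm : (k:ℕ) < m
    · rw [dif_pos hkm, dif_pos (by omega)]
      have e1 : k - 1 = ((⟨(k:ℕ) - 1, by omega⟩ : Fin m)).castSucc := by
        apply Fin.ext; rw [hk1, if_neg h0]; rfl
      have e2 : ((⟨(k:ℕ), hkm⟩ : Fin m)).castSucc = k := by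
        apply Fin.ext; rfl
      simp only [e1, e2]
      ring
    · rw [dif_neg hkm, dif_pos (by omega)]
      have e1 : k - 1 = ((⟨(k:ℕ) - 1, by omega⟩ : Fin m)).castSucc := by
        apply Fin.ext; rw [hk1, if_neg h0]; rfl
      have e3 : u k = u (Fin.last m) := congrArg u (by apply Fin.ext; simp [Fin.last]; omega)
      simp only [e1, e3]
      ring

lemma phi_injective (m : ℕ) : Function.Injective (phiMap m) := by
  intro x y h
  have key : ∀ d : ℕ, ∀ i : Fin m, (i:ℕ) + d = m - 1 → x i = y i := by
    intro d
    induction d with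
    | zero =>
      intro i hi
      have hm : 0 < m := i.pos
      have h1 := congrFun h ⟨m, by omega⟩
      unfold phiMap at h1
      simp only [dif_neg (show ¬((((⟨m, by omega⟩ : Fin (m+1)) : ℕ)) < m) from by simp),
        dif_pos (show 0 < (((⟨m, by omega⟩ : Fin (m+1)) : ℕ)) from by simpa using hm)] at h1
      have : x ⟨m - 1, by omega⟩ = y ⟨m - 1, by omega⟩ := by linarith
      have ei : i = (⟨m - 1, by omega⟩ : Fin m) := by apply Fin.ext; simp; omega
      rw [ei]; exact this
    | succ d ih =>
      intro i hi
      have hi1 : (i:ℕ) + 1 < m := by omega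
      have hnext := ih ⟨(i:ℕ)+1, hi1⟩ (by simp; omega)
      have h1 := congrFun h ⟨(i:ℕ)+1, by omega⟩
      unfold phiMap at h1
      simp only [dif_pos (show (((⟨(i:ℕ)+1, by omega⟩ : Fin (m+1)) : ℕ)) < m from by simpa using hi1),
        dif_pos (show 0 < (((⟨(i:ℕ)+1, by omega⟩ : Fin (m+1)) : ℕ)) from by simp)] at h1
      simp only [Nat.add_sub_cancel] at h1
      have ei : (⟨(i:ℕ), by omega⟩ : Fin m) = i := by apply Fin.ext; rfl
      rw [ei] at h1
      have ex : x ⟨(i:ℕ)+1, by omega⟩ = y ⟨(i:ℕ)+1, by omega⟩ := hnext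
      rw [ex] at h1
      linarith
  funext i
  exact key (m - 1 - (i:ℕ)) i (by have := i.isLt; omega)

/-- `φ` maps the zonotope `Z(e₁, …, e_{n-1}, -𝟙) ⊂ ℝ^(n-1)` bijectively onto the
graphic zonotope of the cycle graph `C_n`, `Z_{C_n} = Σ_{j=1}^n [e_j, e_{j+1}]`
(indices mod `n`), where `n = m+1`. -/
theorem phi_maps_zonotope_onto_cycle_zonotope (m : ℕ) (hm : 1 ≤ m) :
    Set.InjOn (phiMap m)
        ((∑ i : Fin m, segment ℝ (0 : Fin m → ℝ) (Pi.single i 1))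
          + segment ℝ (0 : Fin m → ℝ) (fun _ => -1)) ∧
      phiMap m ''
          ((∑ i : Fin m, segment ℝ (0 : Fin m → ℝ) (Pi.single i 1))
            + segment ℝ (0 : Fin m → ℝ) (fun _ => -1))
        = ∑ j : Fin (m + 1), segment ℝ (Pi.single j (1 : ℝ)) (Pi.single (j + 1) 1) := by
  -- characterization of the domain zonotope
  have hZ : ∀ x : Fin m → ℝ,
      x ∈ ((∑ i : Fin m, segment ℝ (0 : Fin m → ℝ) (Pi.single i 1))
          + segment ℝ (0 : Fin m → ℝ) (fun _ => -1)) ↔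
      ∃ t : Fin m → ℝ, ∃ s : ℝ, (∀ i, t i ∈ Set.Icc (0:ℝ) 1) ∧ s ∈ Set.Icc (0:ℝ) 1 ∧
        x = fun i => t i - s := by
    intro x
    constructor
    · rintro ⟨a, ha, b, hb, rfl⟩
      rw [Set.mem_fintype_sum] at ha
      obtain ⟨g, hg, hsum⟩ := ha
      have hθ : ∀ i, ∃ θ ∈ Set.Icc (0:ℝ) 1, θ • (Pi.single i 1 : Fin m → ℝ) = g i := by
        intro i; exact (mem_segment_zero _ _).1 (hg i)
      choose θ hθ1 hθ2 using hθ
      obtain ⟨s, hs, hsb⟩ := (mem_segment_zero _ _).1 hb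
      refine ⟨θ, s, hθ1, hs, ?_⟩
      have ha' : a = θ := by
        rw [← hsum, ← sum_smul_single m θ]
        exact Finset.sum_congr rfl fun i _ => (hθ2 i).symm
      funext i
      rw [ha']
      have : b i = -s := by rw [← hsb]; simp
      simp [this]; ring
    · rintro ⟨t, s, ht, hs, rfl⟩
      refine ⟨t, ?_, fun _ => -s, ?_, by funext i; simp [sub_eq_add_neg]⟩
      · rw [Set.mem_fintype_sum]
        refine ⟨fun i => t i • (Pi.single i 1 : Fin m → ℝ), fun i => ?_, sum_smul_single m t⟩
        exact (mem_segment_zero _ _).2 ⟨t i, ht i, rfl⟩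
      · exact (mem_segment_zero _ _).2 ⟨s, hs, by funext i; simp⟩
  constructor
  · exact (phi_injective m).injOn
  · ext p
    constructor
    · rintro ⟨x, hx, rfl⟩
      obtain ⟨t, s, ht, hs, rfl⟩ := (hZ _).1 hx
      set u : Fin (m+1) → ℝ := fun j => if h : (j:ℕ) < m then t ⟨j, h⟩ else s with hu
      have hxu : (fun i => t i - s) = fun i : Fin m => u i.castSucc - u (Fin.last m) := by
        funext i
        have e1 : u i.castSucc = t i := by
          rw [hu]; simp only
          rw [dif_pos (by simp)]
          congr 1
        have e2 : u (Fin.last m) = s := by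
          rw [hu]; simp only
          rw [dif_neg (by simp)]
        rw [e1, e2]
      rw [hxu, ← keyB m hm u, Set.mem_fintype_sum]
      refine ⟨fun j => (1 - u j) • (Pi.single j 1 : Fin (m+1) → ℝ)
        + u j • (Pi.single (j+1) 1 : Fin (m+1) → ℝ), fun j => ?_, rfl⟩
      rw [segment_eq_image]
      refine ⟨u j, ?_, rfl⟩
      rw [hu]; simp only
      split <;> [exact ⟨(ht _).1, (ht _).2⟩; exact ⟨hs.1, hs.2⟩]
    · intro hp
      rw [Set.mem_fintype_sum] at hp
      obtain ⟨g, hg, hsum⟩ := hp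
      have hθ : ∀ j, ∃ θ ∈ Set.Icc (0:ℝ) 1,
          (1 - θ) • (Pi.single j 1 : Fin (m+1) → ℝ)
            + θ • (Pi.single (j+1) 1 : Fin (m+1) → ℝ) = g j := by
        intro j
        have := hg j
        rw [segment_eq_image] at this
        exact this
      choose u hu1 hu2 using hθ
      refine ⟨fun i => u i.castSucc - u (Fin.last m), (hZ _).2
        ⟨fun i => u i.castSucc, u (Fin.last m), fun i => hu1 _, hu1 _, rfl⟩, ?_⟩
      rw [← keyB m hm u, ← hsum]
      exact Finset.sum_congr rfl fun j _ => hu2 j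
end

section
/- The number of lattice points in the t-th dilate of the zonotope Z(e₁, ..., e_{n-1}, -𝟙) ⊂ ℝ^{n-1} equals (t+1)^n - t^n = Σ_{k=0}^{n-1} C(n,k) t^k, for every nonnegative integer t. -/
open Pointwise

/-- The zonotope `Z(e₁, …, e_{n-1}, -𝟙) ⊂ ℝ^(n-1)`, with `n = m+1`; it is linearly
isomorphic to the cocircuit polytope `P_{n-1}` of `K_n`. -/
noncomputable def zonoP (m : ℕ) : Set (Fin m → ℝ) :=
  (∑ i : Fin m, segment ℝ (0 : Fin m → ℝ) (Pi.single i 1))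
    + segment ℝ (0 : Fin m → ℝ) (fun _ => -1)

lemma mem_seg {m : ℕ} (v z : Fin m → ℝ) :
    z ∈ segment ℝ (0 : Fin m → ℝ) v ↔ ∃ a ∈ Set.Icc (0:ℝ) 1, z = a • v := by
  rw [segment_eq_image]
  constructor
  · rintro ⟨a, ha, rfl⟩; exact ⟨a, ha, by simp⟩
  · rintro ⟨a, ha, rfl⟩; exact ⟨a, ha, by simp⟩

lemma mem_zonoP {m : ℕ} (y : Fin m → ℝ) :
    y ∈ zonoP m ↔ ∃ b ∈ Set.Icc (0:ℝ) 1, ∀ i, y i + b ∈ Set.Icc (0:ℝ) 1 := by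
  constructor
  · rintro ⟨s, hs, w, hw, rfl⟩
    rw [Set.mem_finset_sum] at hs
    obtain ⟨g, hg, rfl⟩ := hs
    rw [mem_seg] at hw
    obtain ⟨b, hb, rfl⟩ := hw
    refine ⟨b, hb, fun i => ?_⟩
    have hgi := hg (Finset.mem_univ i)
    rw [mem_seg] at hgi
    obtain ⟨a, ha, hga⟩ := hgi
    have : (∑ j, g j) i = a := by
      rw [Finset.sum_apply]
      rw [Finset.sum_eq_single i]
      · rw [hga]; simp
      · intro j _ hji
        have := hg (Finset.mem_univ j)
        rw [mem_seg] at this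
        obtain ⟨c, _, hc⟩ := this
        rw [hc]; simp [Pi.single_apply, hji.symm]
      · simp
    simp only [Pi.add_apply, this]
    simpa using ha
  · rintro ⟨b, hb, h⟩
    refine ⟨fun i => y i + b, ?_, fun _ => -b, ?_, by funext i; simp⟩
    · rw [Set.mem_finset_sum]
      refine ⟨fun i => Pi.single i (y i + b), fun {i} _ => ?_, ?_⟩
      · rw [mem_seg]
        refine ⟨y i + b, h i, ?_⟩
        funext j
        simp [Pi.single_apply]
      · exact Finset.univ_sum_single _
    · rw [mem_seg]
      exact ⟨b, hb, by funext i; simp⟩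

lemma zonoP_nonempty (m : ℕ) : (0 : Fin m → ℝ) ∈ zonoP m := by
  rw [mem_zonoP]
  exact ⟨0, by simp, fun i => by simp⟩

lemma mem_smul_zonoP {m : ℕ} (t : ℝ) (ht : 0 ≤ t) (y : Fin m → ℝ) :
    y ∈ t • zonoP m ↔ ∃ b ∈ Set.Icc (0:ℝ) t, ∀ i, y i + b ∈ Set.Icc (0:ℝ) t := by
  rcases eq_or_lt_of_le ht with rfl | htpos
  · rw [Set.zero_smul_set ⟨0, zonoP_nonempty m⟩]
    simp only [Set.mem_zero, Set.Icc_self, Set.mem_singleton_iff]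
    constructor
    · rintro rfl; exact ⟨0, rfl, fun i => by simp⟩
    · rintro ⟨b, rfl, h⟩
      funext i; simpa using h i
  · rw [Set.mem_smul_set_iff_inv_smul_mem₀ (ne_of_gt htpos), mem_zonoP]
    constructor
    · rintro ⟨b, hb, h⟩
      refine ⟨t * b, ⟨mul_nonneg htpos.le hb.1, by nlinarith [hb.2]⟩, fun i => ?_⟩
      have := h i
      simp only [Pi.smul_apply, smul_eq_mul, Set.mem_Icc] at this ⊢
      have hyi : t * (t⁻¹ * y i + b) = y i + t * b := by field_simp
      have h1 : 0 ≤ t * (t⁻¹ * y i + b) := mul_nonneg htpos.le this.1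
      have h2 : t * (t⁻¹ * y i + b) ≤ t * 1 := mul_le_mul_of_nonneg_left this.2 htpos.le
      rw [hyi] at h1 h2
      constructor <;> linarith
    · rintro ⟨b, hb, h⟩
      refine ⟨b / t, ⟨div_nonneg hb.1 htpos.le, by rw [div_le_one htpos]; exact hb.2⟩, fun i => ?_⟩
      have := h i
      simp only [Pi.smul_apply, smul_eq_mul, Set.mem_Icc] at this ⊢
      rw [inv_mul_eq_div, ← add_div, le_div_iff₀ htpos, div_le_one htpos]
      constructor
      · linarith [this.1]
      · linarith [this.2]

lemma mem_smul_zonoP_int {m t : ℕ} (x : Fin m → ℤ) :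
    ((fun i => (x i : ℝ)) ∈ (t : ℝ) • zonoP m) ↔
      ∃ c ∈ Finset.Icc (-(t:ℤ)) 0, ∀ i, x i ∈ Finset.Icc c (c + t) := by
  rw [mem_smul_zonoP (t:ℝ) (by positivity)]
  constructor
  · rintro ⟨b, hb, h⟩
    refine ⟨⌊-b⌋, ?_, fun i => ?_⟩
    · rw [Finset.mem_Icc]
      constructor
      · exact Int.le_floor.mpr (by push_cast; linarith [hb.2])
      · have : ⌊-b⌋ ≤ ⌊(0:ℝ)⌋ := Int.floor_mono (by linarith [hb.1])
        simpa using this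
    · rw [Finset.mem_Icc]
      have hi := h i
      simp only [Set.mem_Icc] at hi
      constructor
      · have h1 : (⌊-b⌋ : ℝ) ≤ (x i : ℝ) := le_trans (Int.floor_le _) (by linarith [hi.1])
        exact_mod_cast h1
      · have h2 : x i ≤ ⌊((t:ℤ):ℝ) + (-b)⌋ := Int.le_floor.mpr (by push_cast; linarith [hi.2])
        rw [Int.floor_intCast_add] at h2
        omega
  · rintro ⟨c, hc, h⟩
    rw [Finset.mem_Icc] at hc
    refine ⟨-(c:ℝ), ⟨by exact_mod_cast neg_nonneg.mpr hc.2, by exact_mod_cast neg_le.mpr hc.1⟩,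
      fun i => ?_⟩
    have hi := h i
    rw [Finset.mem_Icc] at hi
    have h1 : (c:ℝ) ≤ (x i : ℝ) := by exact_mod_cast hi.1
    have h2 : (x i : ℝ) ≤ (c:ℝ) + t := by exact_mod_cast hi.2
    exact ⟨by linarith, by linarith⟩

section Count

variable (m t : ℕ)

/-- The box `[c, c+t]^m`. -/
noncomputable def Box (c : ℤ) : Finset (Fin m → ℤ) := Fintype.piFinset (fun _ => Finset.Icc c (c + t))

lemma mem_Box (c : ℤ) (x : Fin m → ℤ) : x ∈ Box m t c ↔ ∀ i, c ≤ x i ∧ x i ≤ c + t := by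
  simp [Box, Fintype.mem_piFinset, Finset.mem_Icc]

lemma card_Box (c : ℤ) : (Box m t c).card = (t + 1) ^ m := by
  simp [Box, Fintype.card_piFinset, Int.card_Icc]
  congr 1
  omega

/-- One piece of the partition. -/
noncomputable def Dpiece (c : ℤ) : Finset (Fin m → ℤ) :=
  (Box m t c).filter (fun x => c = 0 ∨ x ∉ Box m t (c + 1))

lemma card_Dpiece_zero : (Dpiece m t 0).card = (t + 1) ^ m := by
  rw [Dpiece, Finset.filter_true_of_mem (fun x _ => Or.inl rfl), card_Box]

lemma card_Dpiece_neg (c : ℤ) (hc : c < 0) : (Dpiece m t c).card = (t + 1) ^ m - t ^ m := by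
  have hfe : Dpiece m t c = (Box m t c).filter (fun x => ¬ x ∈ Box m t (c + 1)) := by
    apply Finset.filter_congr
    intro x _
    simp only [eq_iff_iff, or_iff_right_iff_imp]
    intro h; omega
  have hsub : (Box m t c).filter (fun x => x ∈ Box m t (c + 1))
      = Fintype.piFinset (fun _ : Fin m => Finset.Icc (c + 1) (c + t)) := by
    ext x
    simp only [Finset.mem_filter, mem_Box, Fintype.mem_piFinset, Finset.mem_Icc]
    constructor
    · rintro ⟨h1, h2⟩ i; exact ⟨(h2 i).1, (h1 i).2⟩
    · intro h
      exact ⟨fun i => ⟨by linarith [(h i).1], (h i).2⟩,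
        fun i => ⟨(h i).1, by linarith [(h i).2]⟩⟩
  have hcard2 : ((Box m t c).filter (fun x => x ∈ Box m t (c + 1))).card = t ^ m := by
    rw [hsub]
    simp only [Fintype.card_piFinset, Int.card_Icc, Finset.prod_const, Finset.card_univ,
      Fintype.card_fin]
    congr 1
    omega
  rw [hfe, Finset.filter_not, Finset.card_sdiff_of_subset (Finset.filter_subset _ _), card_Box, hcard2]

lemma Dpiece_subset (c : ℤ) : Dpiece m t c ⊆ Box m t c := Finset.filter_subset _ _

lemma Dpiece_disjoint : (↑(Finset.Icc (-(t:ℤ)) 0 : Finset ℤ) : Set ℤ).PairwiseDisjoint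
    (Dpiece m t) := by
  have key : ∀ c c' : ℤ, c < c' → c' ≤ 0 → Disjoint (Dpiece m t c) (Dpiece m t c') := by
    intro c c' hlt hle
    rw [Finset.disjoint_left]
    intro x hx hx'
    have h1 : x ∈ Box m t c := Dpiece_subset m t c hx
    have h2 : x ∈ Box m t c' := Dpiece_subset m t c' hx'
    rw [Dpiece, Finset.mem_filter] at hx
    rcases hx.2 with h0 | hnb
    · omega
    · apply hnb
      rw [mem_Box] at h1 h2 ⊢
      intro i
      exact ⟨by linarith [(h2 i).1], by linarith [(h1 i).2]⟩
  intro c hc c' hc' hne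
  simp only [Finset.coe_Icc, Set.mem_Icc] at hc hc'
  rcases lt_or_gt_of_ne hne with h | h
  · exact key c c' h hc'.2
  · exact (key c' c h hc.2).symm

/-- The full set of lattice points. -/
noncomputable def latF : Finset (Fin m → ℤ) := (Finset.Icc (-(t:ℤ)) 0).biUnion (Dpiece m t)

lemma mem_latF (x : Fin m → ℤ) :
    x ∈ latF m t ↔ ∃ c ∈ Finset.Icc (-(t:ℤ)) 0, ∀ i, x i ∈ Finset.Icc c (c + t) := by
  simp only [latF, Finset.mem_biUnion]
  constructor
  · rintro ⟨c, hc, hx⟩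
    refine ⟨c, hc, fun i => ?_⟩
    have := (mem_Box m t c x).mp (Dpiece_subset m t c hx) i
    rw [Finset.mem_Icc]; exact this
  · rintro ⟨c, hc, hx⟩
    rw [Finset.mem_Icc] at hc
    simp only [Finset.mem_Icc] at hx
    by_cases h0 : ∀ i, 0 ≤ x i
    · refine ⟨0, by simp, ?_⟩
      rw [Dpiece, Finset.mem_filter]
      refine ⟨(mem_Box m t 0 x).mpr (fun i => ⟨h0 i, ?_⟩), Or.inl rfl⟩
      · have := (hx i).2; omega
    · push_neg at h0
      obtain ⟨i₀, hi₀⟩ := h0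
      have hne : (Finset.univ : Finset (Fin m)).Nonempty := ⟨i₀, Finset.mem_univ _⟩
      set c' := Finset.univ.inf' hne x with hc'
      obtain ⟨k, -, hk⟩ := Finset.exists_mem_eq_inf' hne x
      have hle : ∀ j, c' ≤ x j := fun j => Finset.inf'_le x (Finset.mem_univ j)
      have hcc' : c ≤ c' := Finset.le_inf' hne x (fun j _ => (hx j).1)
      have hc'0 : c' ≤ x i₀ := hle i₀
      refine ⟨c', Finset.mem_Icc.mpr ⟨by omega, by omega⟩, ?_⟩
      rw [Dpiece, Finset.mem_filter]
      constructor
      · rw [mem_Box]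
        intro j
        exact ⟨hle j, by have := (hx j).2; omega⟩
      · refine Or.inr (fun hmem => ?_)
        rw [mem_Box] at hmem
        have := (hmem k).1
        omega

lemma card_latF : (latF m t).card = (t + 1) ^ (m + 1) - t ^ (m + 1) := by
  rw [latF, Finset.card_biUnion (fun c hc c' hc' hne =>
    Dpiece_disjoint m t (by simpa using hc) (by simpa using hc') hne)]
  have hsplit : (Finset.Icc (-(t:ℤ)) 0) = insert 0 (Finset.Icc (-(t:ℤ)) (-1)) := by
    ext c; simp [Finset.mem_Icc]; omega
  rw [hsplit, Finset.sum_insert (by simp [Finset.mem_Icc])]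
  rw [card_Dpiece_zero]
  rw [Finset.sum_congr rfl (fun c hc => card_Dpiece_neg m t c
    (by rw [Finset.mem_Icc] at hc; omega))]
  rw [Finset.sum_const, Int.card_Icc]
  have hcount : (-1 + 1 - (-(t:ℤ))).toNat = t := by omega
  rw [hcount, smul_eq_mul]
  -- arithmetic
  have hBA : t ^ m ≤ (t + 1) ^ m := Nat.pow_le_pow_left (by omega) m
  obtain ⟨d, hd⟩ : ∃ d, (t + 1) ^ m = t ^ m + d := ⟨(t + 1) ^ m - t ^ m, by omega⟩
  have h2 : (t + 1) ^ m - t ^ m = d := by omega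
  rw [h2]
  have h3 : t ^ (m + 1) ≤ (t + 1) ^ (m + 1) := Nat.pow_le_pow_left (by omega) (m + 1)
  rw [eq_comm, Nat.sub_eq_iff_eq_add h3, pow_succ, pow_succ, hd]
  ring

end Count

/-- the number of lattice points in the `t`-th dilate of
`Z(e₁, …, e_{n-1}, -𝟙) ⊂ ℝ^(n-1)` is `(t+1)^n - t^n = Σ_{k=0}^{n-1} C(n,k) t^k`,
with `n = m+1`. -/
theorem lattice_points_of_dilate (m t : ℕ) :
    Nat.card {x : Fin m → ℤ // (fun i => (x i : ℝ)) ∈ (t : ℝ) • zonoP m}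
        = (t + 1) ^ (m + 1) - t ^ (m + 1) ∧
      Nat.card {x : Fin m → ℤ // (fun i => (x i : ℝ)) ∈ (t : ℝ) • zonoP m}
        = ∑ k ∈ Finset.range (m + 1), (m + 1).choose k * t ^ k := by
  have hchar : ∀ x : Fin m → ℤ, ((fun i => (x i : ℝ)) ∈ (t : ℝ) • zonoP m) ↔ x ∈ latF m t :=
    fun x => (mem_smul_zonoP_int x).trans (mem_latF m t x).symm
  have hcard : Nat.card {x : Fin m → ℤ // (fun i => (x i : ℝ)) ∈ (t : ℝ) • zonoP m}
      = (latF m t).card := by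
    rw [Nat.card_congr (Equiv.subtypeEquivRight hchar)]
    exact Nat.card_eq_finsetCard _
  have hb : (t + 1) ^ (m + 1)
      = (∑ k ∈ Finset.range (m + 1), (m + 1).choose k * t ^ k) + t ^ (m + 1) := by
    rw [add_pow, Finset.sum_range_succ]
    simp only [Nat.cast_id, Nat.choose_self, one_pow, mul_one, Nat.sub_self, pow_zero]
    congr 1
    exact Finset.sum_congr rfl fun k _ => by ring
  refine ⟨by rw [hcard, card_latF], ?_⟩
  rw [hcard, card_latF, hb, Nat.add_sub_cancel]
end

section
/- For n ≥ 2, the map (S,T) ↦ Σ_{j∈S} u_j + Σ_{j∈T∖S} [0, u_j] is a bijection between pairs (S,T) with ∅ ⊊ S ⊆ T ⊊ [n] and |T∖S| = i, and the i-dimensional faces of P_{n-1}, for each 0 ≤ i < n-1. -/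
open Pointwise

/-- The generators `u₁, …, u_n` of `P_{n-1} ⊂ ℝ^(n-1)`: `u_j = e_j` for `j < n` and
`u_n = -𝟙`, with `n = m+1`. -/
noncomputable def uVec (m : ℕ) (j : Fin (m + 1)) : Fin m → ℝ :=
  if h : (j : ℕ) < m then Pi.single ⟨j, h⟩ 1 else fun _ => -1

/-- The zonotope `P_{n-1} = Z(u₁, …, u_n)`. -/
noncomputable def Pzono (m : ℕ) : Set (Fin m → ℝ) :=
  ∑ j : Fin (m + 1), segment ℝ 0 (uVec m j)

/-- The candidate face `Σ_{j∈S} u_j + Σ_{j∈T∖S} [0, u_j]` associated to a pair `(S, T)`. -/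
noncomputable def faceOf (m : ℕ) (S T : Finset (Fin (m + 1))) : Set (Fin m → ℝ) :=
  {∑ j ∈ S, uVec m j} + ∑ j ∈ T \ S, segment ℝ 0 (uVec m j)

/-! ### basic helpers -/

lemma mem_seg_iff {E : Type*} [AddCommGroup E] [Module ℝ E] {v y : E} :
    y ∈ segment ℝ 0 v ↔ ∃ t : ℝ, 0 ≤ t ∧ t ≤ 1 ∧ y = t • v := by
  rw [segment_eq_image]
  constructor
  · rintro ⟨t, ⟨h0, h1⟩, rfl⟩
    exact ⟨t, h0, h1, by simp⟩
  · rintro ⟨t, h0, h1, rfl⟩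
    exact ⟨t, ⟨h0, h1⟩, by simp⟩

lemma uVec_castSucc (m : ℕ) (j : Fin m) :
    uVec m (Fin.castSucc j) = Pi.single j 1 := by
  simp [uVec, j.isLt]

lemma uVec_last (m : ℕ) : uVec m (Fin.last m) = fun _ => -1 := by
  simp [uVec]

lemma sum_smul_uVec_apply (m : ℕ) (c : Fin (m + 1) → ℝ) (k : Fin m) :
    (∑ j, c j • uVec m j) k = c (Fin.castSucc k) - c (Fin.last m) := by
  rw [Fin.sum_univ_castSucc]
  simp only [Pi.add_apply, Finset.sum_apply, Pi.smul_apply, uVec_last, smul_eq_mul]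
  have : ∀ j : Fin m, c (Fin.castSucc j) * (uVec m (Fin.castSucc j)) k
      = if j = k then c (Fin.castSucc k) else 0 := by
    intro j
    rw [uVec_castSucc]
    rcases eq_or_ne j k with rfl | h
    · simp
    · simp [Pi.single_apply, h]
  simp only [this]
  rw [Finset.sum_ite_eq' Finset.univ k fun _ => c (Fin.castSucc k)]
  simp [sub_eq_add_neg]

/-- the only linear dependencies among the `uVec`s have all coefficients equal -/
lemma dep_const (m : ℕ) (c : Fin (m + 1) → ℝ) (h : ∑ j, c j • uVec m j = 0)
    (j : Fin (m + 1)) : c j = c (Fin.last m) := by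
  induction j using Fin.lastCases with
  | last => rfl
  | cast k =>
    have := congrFun h k
    rw [sum_smul_uVec_apply] at this
    simpa [sub_eq_zero] using this

lemma sum_uVec (m : ℕ) : ∑ j, uVec m j = 0 := by
  have h : ∑ j, (1 : ℝ) • uVec m j = ∑ j, uVec m j := by simp
  funext k
  have := sum_smul_uVec_apply m (fun _ => (1:ℝ)) k
  rw [h] at this
  simpa using this

open Classical in
/-- extend coefficients from a finset to everything, by zero -/
lemma sum_extend (m : ℕ) (D : Finset (Fin (m + 1))) (g : D → ℝ) :
    ∑ j : D, g j • uVec m j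
      = ∑ j, (if h : j ∈ D then g ⟨j, h⟩ else 0) • uVec m j := by
  calc ∑ j : D, g j • uVec m j
      = ∑ j : D, (if h : (j : Fin (m+1)) ∈ D then g ⟨j, h⟩ else 0) • uVec m (j : Fin (m+1)) := by
        apply Finset.sum_congr rfl
        intro j _
        simp [j.2]
    _ = ∑ j ∈ D, (if h : j ∈ D then g ⟨j, h⟩ else 0) • uVec m j :=
        Finset.sum_coe_sort D (fun j => (if h : j ∈ D then g ⟨j, h⟩ else 0) • uVec m j)
    _ = ∑ j, (if h : j ∈ D then g ⟨j, h⟩ else 0) • uVec m j := by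
        apply Finset.sum_subset (Finset.subset_univ D)
        intro j _ hj
        simp [hj]

/-- if all coefficients in a dependency are zero outside `D ≠ univ`, they vanish -/
lemma dep_zero (m : ℕ) (D : Finset (Fin (m + 1))) (hD : D ≠ Finset.univ)
    (c : Fin (m + 1) → ℝ) (hc : ∀ j ∉ D, c j = 0)
    (h : ∑ j, c j • uVec m j = 0) : ∀ j, c j = 0 := by
  obtain ⟨j₀, hj₀⟩ : ∃ j₀, j₀ ∉ D := by
    by_contra hcon
    push_neg at hcon
    exact hD (Finset.eq_univ_iff_forall.2 hcon)
  intro j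
  rw [dep_const m c h j, ← dep_const m c h j₀, hc j₀ hj₀]

lemma uVec_indep (m : ℕ) (D : Finset (Fin (m + 1))) (hD : D ≠ Finset.univ) :
    LinearIndependent ℝ (fun j : D => uVec m j) := by
  classical
  rw [Fintype.linearIndependent_iff]
  intro g hg j
  have h0 : ∑ j, (if h : j ∈ D then g ⟨j, h⟩ else 0) • uVec m j = 0 := by
    rw [← sum_extend]; exact hg
  have := dep_zero m D hD _ (fun j hj => by simp [hj]) h0 j
  simpa [j.2] using this

noncomputable def segSum (m : ℕ) (D : Finset (Fin (m + 1))) : Set (Fin m → ℝ) :=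
  ∑ j ∈ D, segment ℝ 0 (uVec m j)

lemma zero_mem_segSum (m : ℕ) (D : Finset (Fin (m + 1))) : 0 ∈ segSum m D := by
  have := Set.finset_sum_mem_finset_sum D (fun j => segment ℝ 0 (uVec m j))
    (fun _ => 0) (fun j _ => left_mem_segment ℝ 0 (uVec m j))
  simpa [segSum] using this

lemma uVec_mem_segSum (m : ℕ) {D : Finset (Fin (m + 1))} {j : Fin (m + 1)} (hj : j ∈ D) :
    uVec m j ∈ segSum m D := by
  classical
  have := Set.finset_sum_mem_finset_sum D (fun k => segment ℝ 0 (uVec m k))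
    (fun k => if k = j then uVec m j else 0)
    (fun k _ => by
      rcases eq_or_ne k j with rfl | h
      · simpa using right_mem_segment ℝ 0 (uVec m k)
      · simpa [h] using left_mem_segment ℝ 0 (uVec m k))
  simpa [segSum, Finset.sum_ite_eq' D j, hj] using this

lemma segSum_subset_span (m : ℕ) (D : Finset (Fin (m + 1))) :
    segSum m D ⊆ (Submodule.span ℝ (uVec m '' ↑D) : Submodule ℝ (Fin m → ℝ)) := by
  intro x hx
  rw [segSum, Set.mem_finset_sum] at hx
  obtain ⟨g, hg, rfl⟩ := hx
  apply Submodule.sum_mem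
  intro j hj
  obtain ⟨t, _, _, heq⟩ := mem_seg_iff.1 (hg hj)
  rw [heq]
  exact Submodule.smul_mem _ _ (Submodule.subset_span ⟨j, hj, rfl⟩)

lemma vectorSpan_face (m : ℕ) (a : Fin m → ℝ) (D : Finset (Fin (m + 1))) :
    vectorSpan ℝ ({a} + segSum m D) = Submodule.span ℝ (uVec m '' ↑D) := by
  apply le_antisymm
  · rw [vectorSpan_def, Submodule.span_le]
    rintro z hz
    rw [Set.mem_vsub] at hz
    obtain ⟨x, hx, y, hy, rfl⟩ := hz
    rw [Set.mem_add] at hx hy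
    obtain ⟨a1, ha1, x1, hx1, rfl⟩ := hx
    obtain ⟨a2, ha2, y1, hy1, rfl⟩ := hy
    obtain rfl := Set.mem_singleton_iff.1 ha1
    obtain rfl := Set.mem_singleton_iff.1 ha2
    have hkey : ∀ b x y : Fin m → ℝ, b + x -ᵥ (b + y) = x - y := by
      intro b x y
      simp only [vsub_eq_sub]; abel
    rw [hkey]
    exact SetLike.mem_coe.2
      (sub_mem (segSum_subset_span m D hx1) (segSum_subset_span m D hy1))
  · rw [Submodule.span_le]
    rintro z ⟨j, hj, rfl⟩
    rw [Finset.mem_coe] at hj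
    have h1 : a + uVec m j ∈ {a} + segSum m D :=
      Set.add_mem_add rfl (uVec_mem_segSum m hj)
    have h2 : a + 0 ∈ {a} + segSum m D :=
      Set.add_mem_add rfl (zero_mem_segSum m D)
    have : uVec m j = (a + uVec m j) -ᵥ (a + 0) := by
      simp [vsub_eq_sub]
    rw [this]
    exact SetLike.mem_coe.2 (Submodule.subset_span (Set.vsub_mem_vsub h1 h2))

lemma finrank_face (m : ℕ) (D : Finset (Fin (m + 1))) (hD : D ≠ Finset.univ) :
    Module.finrank ℝ (Submodule.span ℝ (uVec m '' ↑D)) = D.card := by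
  have himg : uVec m '' ↑D = Set.range (fun j : D => uVec m j) := by
    ext z
    constructor
    · rintro ⟨j, hj, rfl⟩
      exact ⟨⟨j, hj⟩, rfl⟩
    · rintro ⟨⟨j, hj⟩, rfl⟩
      exact ⟨j, hj, rfl⟩
  rw [himg, finrank_span_eq_card (uVec_indep m D hD), Fintype.card_coe]

lemma faceOf_eq (m : ℕ) (S T : Finset (Fin (m + 1))) :
    faceOf m S T = {∑ j ∈ S, uVec m j} + segSum m (T \ S) := rfl

lemma Pzono_eq (m : ℕ) : Pzono m = segSum m Finset.univ := rfl

lemma faceOf_nonempty (m : ℕ) (S T : Finset (Fin (m + 1))) :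
    (faceOf m S T).Nonempty :=
  ⟨∑ j ∈ S, uVec m j + 0, Set.add_mem_add rfl (zero_mem_segSum m _)⟩

variable {m : ℕ} (l : (Fin m → ℝ) →L[ℝ] ℝ)

lemma seg_bound {v y : Fin m → ℝ} (hy : y ∈ segment ℝ 0 v) :
    l y ≤ max 0 (l v) := by
  obtain ⟨t, h0, h1, rfl⟩ := mem_seg_iff.1 hy
  rw [map_smul, smul_eq_mul]
  rcases le_or_gt (l v) 0 with h | h
  · calc t * l v ≤ 0 := mul_nonpos_of_nonneg_of_nonpos h0 h
    _ ≤ max 0 (l v) := le_max_left _ _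
  · calc t * l v ≤ 1 * l v := by nlinarith
    _ = l v := one_mul _
    _ ≤ max 0 (l v) := le_max_right _ _

lemma seg_eq_pos {v y : Fin m → ℝ} (hy : y ∈ segment ℝ 0 v)
    (heq : l y = max 0 (l v)) (hv : 0 < l v) : y = v := by
  obtain ⟨t, h0, h1, rfl⟩ := mem_seg_iff.1 hy
  rw [map_smul, smul_eq_mul, max_eq_right hv.le] at heq
  have h2 : (t - 1) * l v = 0 := by rw [sub_mul, one_mul, heq, sub_self]
  rcases mul_eq_zero.1 h2 with h | h
  · rw [sub_eq_zero.1 h, one_smul]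
  · exact absurd h hv.ne'

lemma seg_eq_neg {v y : Fin m → ℝ} (hy : y ∈ segment ℝ 0 v)
    (heq : l y = max 0 (l v)) (hv : l v < 0) : y = 0 := by
  obtain ⟨t, h0, h1, rfl⟩ := mem_seg_iff.1 hy
  rw [map_smul, smul_eq_mul, max_eq_left hv.le] at heq
  have : t = 0 := by
    rcases mul_eq_zero.1 heq with h | h
    · exact h
    · exact absurd h hv.ne
  rw [this, zero_smul]

noncomputable def Mval : ℝ := ∑ j, max 0 (l (uVec m j))

lemma Pzono_bound {x : Fin m → ℝ} (hx : x ∈ Pzono m) : l x ≤ Mval l := by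
  rw [Pzono_eq, segSum, Set.mem_finset_sum] at hx
  obtain ⟨g, hg, rfl⟩ := hx
  rw [map_sum]
  exact Finset.sum_le_sum fun j _ => seg_bound l (hg (Finset.mem_univ j))

section KEY
variable {m : ℕ} (l : (Fin m → ℝ) →L[ℝ] ℝ)

noncomputable def posS : Finset (Fin (m + 1)) :=
  Finset.univ.filter fun j => 0 < l (uVec m j)

noncomputable def nnT : Finset (Fin (m + 1)) :=
  Finset.univ.filter fun j => 0 ≤ l (uVec m j)

lemma posS_subset_nnT : posS l ⊆ nnT l := by
  intro j hj
  simp only [posS, Finset.mem_filter] at hj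
  simp only [nnT, Finset.mem_filter]
  exact ⟨hj.1, hj.2.le⟩

lemma mem_posS {j} : j ∈ posS l ↔ 0 < l (uVec m j) := by simp [posS]
lemma mem_nnT {j} : j ∈ nnT l ↔ 0 ≤ l (uVec m j) := by simp [nnT]

lemma mem_mid {j} : j ∈ nnT l \ posS l ↔ l (uVec m j) = 0 := by
  simp only [Finset.mem_sdiff, mem_nnT, mem_posS]
  constructor
  · rintro ⟨h1, h2⟩; linarith [lt_or_ge 0 (l (uVec m j))]
  · intro h; rw [h]; simp

lemma mem_out {j} : j ∈ Finset.univ \ nnT l ↔ l (uVec m j) < 0 := by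
  simp only [Finset.mem_sdiff, mem_nnT, Finset.mem_univ, true_and]
  exact not_le

lemma segSum_union {A B : Finset (Fin (m + 1))} (h : Disjoint A B) :
    segSum m (A ∪ B) = segSum m A + segSum m B := by
  rw [segSum, Finset.sum_union h]; rfl

lemma segSum_mono {A B : Finset (Fin (m + 1))} (h : A ⊆ B) :
    segSum m A ⊆ segSum m B := by
  have hB : B = A ∪ (B \ A) := (Finset.union_sdiff_of_subset h).symm
  rw [hB, segSum_union Finset.disjoint_sdiff]
  intro x hx
  simpa using Set.add_mem_add hx (zero_mem_segSum m (B \ A))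

lemma pt_mem_segSum (S : Finset (Fin (m + 1))) :
    ∑ j ∈ S, uVec m j ∈ segSum m S :=
  Set.finset_sum_mem_finset_sum S _ _ fun j _ => right_mem_segment ℝ 0 (uVec m j)

lemma faceOf_subset_Pzono {S T : Finset (Fin (m + 1))} (hST : S ⊆ T) :
    faceOf m S T ⊆ Pzono m := by
  rw [faceOf_eq, Pzono_eq]
  rintro x ⟨p, hp, k, hk, rfl⟩
  rw [Set.mem_singleton_iff] at hp
  subst hp
  have h1 : (∑ j ∈ S, uVec m j) + k ∈ segSum m S + segSum m (T \ S) :=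
    Set.add_mem_add (pt_mem_segSum S) hk
  rw [← segSum_union Finset.disjoint_sdiff, Finset.union_sdiff_of_subset hST] at h1
  exact segSum_mono (Finset.subset_univ T) h1

lemma Mval_eq : Mval l = ∑ j ∈ posS l, l (uVec m j) := by
  rw [Mval, ← Finset.sum_filter_add_sum_filter_not Finset.univ
    (fun j => 0 < l (uVec m j)) (fun j => max 0 (l (uVec m j)))]
  have h1 : ∀ j ∈ posS l, max 0 (l (uVec m j)) = l (uVec m j) := by
    intro j hj; exact max_eq_right (mem_posS l |>.1 hj).le
  have h2 : ∀ j ∈ Finset.univ.filter (fun j => ¬ 0 < l (uVec m j)),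
      max 0 (l (uVec m j)) = 0 := by
    intro j hj
    simp only [Finset.mem_filter, not_lt] at hj
    exact max_eq_left hj.2
  have hps : Finset.univ.filter (fun j => 0 < l (uVec m j)) = posS l := rfl
  rw [hps, Finset.sum_congr rfl h2, Finset.sum_congr rfl h1, Finset.sum_const_zero, add_zero]

lemma value_on_face {x : Fin m → ℝ} (hx : x ∈ faceOf m (posS l) (nnT l)) :
    l x = Mval l := by
  rw [faceOf_eq] at hx
  obtain ⟨p, hp, k, hk, rfl⟩ := hx
  rw [Set.mem_singleton_iff] at hp
  subst hp
  have hk0 : l k = 0 := by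
    rw [segSum, Set.mem_finset_sum] at hk
    obtain ⟨g, hg, rfl⟩ := hk
    rw [map_sum]
    apply Finset.sum_eq_zero
    intro j hj
    obtain ⟨t, _, _, heq⟩ := mem_seg_iff.1 (hg hj)
    rw [heq, map_smul, smul_eq_mul, (mem_mid l).1 hj, mul_zero]
  rw [map_add, hk0, add_zero, map_sum, Mval_eq]

lemma max_to_face {x : Fin m → ℝ} (hx : x ∈ Pzono m) (hmax : l x = Mval l) :
    x ∈ faceOf m (posS l) (nnT l) := by
  rw [Pzono_eq, segSum, Set.mem_finset_sum] at hx
  obtain ⟨g, hg, rfl⟩ := hx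
  have hle : ∀ j ∈ Finset.univ, l (g j) ≤ max 0 (l (uVec m j)) :=
    fun j _ => seg_bound l (hg (Finset.mem_univ j))
  have heach : ∀ j ∈ (Finset.univ : Finset (Fin (m+1))),
      l (g j) = max 0 (l (uVec m j)) := by
    rw [← Finset.sum_eq_sum_iff_of_le hle]
    rw [← map_sum]
    exact hmax
  have hsplit : ∑ j, g j
      = (∑ j ∈ posS l, g j) + ((∑ j ∈ nnT l \ posS l, g j)
        + (∑ j ∈ Finset.univ \ nnT l, g j)) := by
    rw [← Finset.sum_sdiff (Finset.subset_univ (nnT l)),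
      ← Finset.sum_sdiff (posS_subset_nnT l)]
    abel
  have hpos : ∀ j ∈ posS l, g j = uVec m j := fun j hj =>
    seg_eq_pos l (hg (Finset.mem_univ j)) (heach j (Finset.mem_univ j))
      ((mem_posS l).1 hj)
  have hneg : ∑ j ∈ Finset.univ \ nnT l, g j = 0 := by
    apply Finset.sum_eq_zero
    intro j hj
    exact seg_eq_neg l (hg (Finset.mem_univ j)) (heach j (Finset.mem_univ j))
      ((mem_out l).1 hj)
  rw [hsplit, hneg, add_zero, Finset.sum_congr rfl hpos, faceOf_eq]
  exact Set.add_mem_add rfl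
    (Set.finset_sum_mem_finset_sum _ _ _ fun j hj => hg (Finset.mem_univ j))

lemma exposed_face_eq :
    {x ∈ Pzono m | ∀ y ∈ Pzono m, l y ≤ l x} = faceOf m (posS l) (nnT l) := by
  obtain ⟨p₀, hp₀⟩ := faceOf_nonempty m (posS l) (nnT l)
  have hp₀P : p₀ ∈ Pzono m := faceOf_subset_Pzono (posS_subset_nnT l) hp₀
  have hp₀v : l p₀ = Mval l := value_on_face l hp₀
  ext x
  constructor
  · rintro ⟨hxP, hxmax⟩
    have : l x = Mval l :=
      le_antisymm (Pzono_bound l hxP) (hp₀v ▸ hxmax p₀ hp₀P)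
    exact max_to_face l hxP this
  · intro hx
    refine ⟨faceOf_subset_Pzono (posS_subset_nnT l) hx, fun y hy => ?_⟩
    rw [value_on_face l hx]
    exact Pzono_bound l hy

end KEY

section construct
variable {m : ℕ}

noncomputable def functl (c : Fin m → ℝ) : (Fin m → ℝ) →L[ℝ] ℝ :=
  LinearMap.toContinuousLinearMap (∑ k, c k • LinearMap.proj k)

lemma functl_apply (c x : Fin m → ℝ) : functl c x = ∑ k, c k * x k := by
  simp [functl, LinearMap.sum_apply, LinearMap.proj]

lemma functl_castSucc (c : Fin m → ℝ) (k : Fin m) :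
    functl c (uVec m (Fin.castSucc k)) = c k := by
  rw [functl_apply, uVec_castSucc]
  rw [Finset.sum_eq_single k]
  · simp
  · intro k' _ hk'
    simp [Pi.single_apply, hk']
  · simp

lemma functl_last (c : Fin m → ℝ) :
    functl c (uVec m (Fin.last m)) = -∑ k, c k := by
  rw [functl_apply, uVec_last]
  simp [mul_comm, ← Finset.sum_neg_distrib]

variable (S T : Finset (Fin (m + 1)))

noncomputable def cf (a b : ℝ) : Fin m → ℝ := fun k =>
  if Fin.castSucc k ∈ S then a
  else if Fin.castSucc k ∈ T then 0 else -b

noncomputable def pS : ℕ :=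
  (Finset.univ.filter fun k : Fin m => Fin.castSucc k ∈ S).card

noncomputable def qT : ℕ :=
  (Finset.univ.filter fun k : Fin m => Fin.castSucc k ∉ T).card

lemma sum_cf (hST : S ⊆ T) (a b : ℝ) :
    ∑ k, cf S T a b k = a * pS S - b * qT T := by
  classical
  rw [← Finset.sum_filter_add_sum_filter_not Finset.univ
    (fun k => Fin.castSucc k ∈ S) (cf S T a b)]
  have h1 : ∀ k ∈ Finset.univ.filter (fun k : Fin m => Fin.castSucc k ∈ S),
      cf S T a b k = a := by
    intro k hk
    simp only [Finset.mem_filter] at hk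
    simp [cf, hk.2]
  have h2 : ∀ k ∈ Finset.univ.filter (fun k : Fin m => Fin.castSucc k ∉ S),
      cf S T a b k = if Fin.castSucc k ∈ T then 0 else -b := by
    intro k hk
    simp only [Finset.mem_filter] at hk
    simp [cf, hk.2]
  rw [Finset.sum_congr rfl h1, Finset.sum_congr rfl h2, Finset.sum_const]
  rw [← Finset.sum_filter_add_sum_filter_not
    (Finset.univ.filter fun k : Fin m => Fin.castSucc k ∉ S)
    (fun k => Fin.castSucc k ∈ T)]
  rw [Finset.sum_ite_of_true (by intro k hk; exact (Finset.mem_filter.1 hk).2),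
    Finset.sum_ite_of_false (by
      intro k hk
      rw [Finset.mem_filter, Finset.mem_filter] at hk
      exact hk.2)]
  rw [Finset.sum_const_zero, Finset.sum_const, Finset.filter_filter]
  have hfilter : (Finset.univ.filter fun k : Fin m =>
        Fin.castSucc k ∉ S ∧ Fin.castSucc k ∉ T)
      = Finset.univ.filter fun k : Fin m => Fin.castSucc k ∉ T := by
    apply Finset.filter_congr
    intro k _
    constructor
    · exact fun h => h.2
    · exact fun h => ⟨fun hS => h (hST hS), h⟩
  rw [hfilter]
  unfold pS qT
  push_cast [nsmul_eq_mul]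
  ring
lemma functl_cf_last (hST : S ⊆ T) (a b : ℝ) :
    functl (cf S T a b) (uVec m (Fin.last m)) = b * qT T - a * pS S := by
  rw [functl_last, sum_cf S T hST]
  ring

lemma check_signs (a b : ℝ) (ha : 0 < a) (hb : 0 < b) (hST : S ⊆ T)
    (h1 : Fin.last m ∈ S → 0 < b * qT T - a * pS S)
    (h2 : Fin.last m ∈ T \ S → b * qT T - a * pS S = 0)
    (h3 : Fin.last m ∉ T → b * qT T - a * pS S < 0) :
    ∃ l : (Fin m → ℝ) →L[ℝ] ℝ,
      (∀ j ∈ S, 0 < l (uVec m j)) ∧ (∀ j ∈ T \ S, l (uVec m j) = 0) ∧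
      (∀ j ∉ T, l (uVec m j) < 0) := by
  refine ⟨functl (cf S T a b), ?_, ?_, ?_⟩
  · intro j hj
    induction j using Fin.lastCases with
    | last => rw [functl_cf_last S T hST]; exact h1 hj
    | cast k =>
      rw [functl_castSucc]
      simpa [cf, hj] using ha
  · intro j hj
    induction j using Fin.lastCases with
    | last => rw [functl_cf_last S T hST]; exact h2 hj
    | cast k =>
      rw [Finset.mem_sdiff] at hj
      rw [functl_castSucc]
      simp [cf, hj.1, hj.2]
  · intro j hj
    induction j using Fin.lastCases with
    | last => rw [functl_cf_last S T hST]; exact h3 hj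
    | cast k =>
      have hjS : Fin.castSucc k ∉ S := fun h => hj (hST h)
      rw [functl_castSucc]
      simpa [cf, hjS, hj] using hb

lemma pS_pos (hS : S.Nonempty) (hlS : Fin.last m ∉ S) : 1 ≤ pS S := by
  obtain ⟨j, hj⟩ := hS
  have hjne : j ≠ Fin.last m := fun h => hlS (h ▸ hj)
  have hlt : (j : ℕ) < m := by
    rcases Fin.lt_or_eq_of_le (Fin.le_last j) with h | h
    · exact h
    · exact absurd h hjne
  have hcast : Fin.castSucc ⟨(j : ℕ), hlt⟩ = j := by
    apply Fin.ext
    simp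
  apply Finset.card_pos.2
  exact ⟨⟨(j : ℕ), hlt⟩, Finset.mem_filter.2 ⟨Finset.mem_univ _, by rw [hcast]; exact hj⟩⟩

lemma qT_pos (hT : T ≠ Finset.univ) (hlT : Fin.last m ∈ T) : 1 ≤ qT T := by
  obtain ⟨j, hj⟩ : ∃ j, j ∉ T := by
    by_contra h
    push_neg at h
    exact hT (Finset.eq_univ_iff_forall.2 h)
  have hjne : j ≠ Fin.last m := fun h => hj (h ▸ hlT)
  have hlt : (j : ℕ) < m := by
    rcases Fin.lt_or_eq_of_le (Fin.le_last j) with h | h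
    · exact h
    · exact absurd h hjne
  have hcast : Fin.castSucc ⟨(j : ℕ), hlt⟩ = j := by
    apply Fin.ext
    simp
  apply Finset.card_pos.2
  exact ⟨⟨(j : ℕ), hlt⟩, Finset.mem_filter.2 ⟨Finset.mem_univ _, fun hmem => hj (hcast ▸ hmem)⟩⟩

lemma exists_functl (hS : S.Nonempty) (hST : S ⊆ T) (hT : T ≠ Finset.univ) :
    ∃ l : (Fin m → ℝ) →L[ℝ] ℝ,
      (∀ j ∈ S, 0 < l (uVec m j)) ∧ (∀ j ∈ T \ S, l (uVec m j) = 0) ∧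
      (∀ j ∉ T, l (uVec m j) < 0) := by
  have hp0 : (0:ℝ) ≤ (pS S : ℝ) := Nat.cast_nonneg _
  have hq0 : (0:ℝ) ≤ (qT T : ℝ) := Nat.cast_nonneg _
  by_cases hlS : Fin.last m ∈ S
  · have hq1 : (1:ℝ) ≤ (qT T : ℝ) := by
      exact_mod_cast qT_pos T hT (hST hlS)
    apply check_signs S T 1 ((pS S : ℝ) + 1) one_pos (by linarith) hST
    · intro _; nlinarith
    · intro h; exact absurd hlS (Finset.mem_sdiff.1 h).2
    · intro h; exact absurd (hST hlS) h
  · by_cases hlT : Fin.last m ∈ T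
    · have hp1 : (1:ℝ) ≤ (pS S : ℝ) := by exact_mod_cast pS_pos S hS hlS
      have hq1 : (1:ℝ) ≤ (qT T : ℝ) := by exact_mod_cast qT_pos T hT hlT
      apply check_signs S T (qT T : ℝ) (pS S : ℝ) (by linarith) (by linarith) hST
      · intro h; exact absurd h hlS
      · intro _; ring
      · intro h; exact absurd hlT h
    · have hp1 : (1:ℝ) ≤ (pS S : ℝ) := by exact_mod_cast pS_pos S hS hlS
      apply check_signs S T ((qT T : ℝ) + 1) 1 (by linarith) one_pos hST
      · intro h; exact absurd (hST h) hlT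
      · intro h; exact absurd (Finset.mem_sdiff.1 h).1 hlT
      · intro _; nlinarith

end construct

section G
variable {m : ℕ}

lemma segSum_repr {D : Finset (Fin (m + 1))} {x : Fin m → ℝ} (hx : x ∈ segSum m D) :
    ∃ t : Fin (m + 1) → ℝ, (∀ j, 0 ≤ t j) ∧ (∀ j ∉ D, t j = 0) ∧
      x = ∑ j, t j • uVec m j := by
  rw [segSum, Set.mem_finset_sum] at hx
  obtain ⟨g, hg, rfl⟩ := hx
  have hch : ∀ j : Fin (m + 1), ∃ t : ℝ, 0 ≤ t ∧ (j ∈ D → g j = t • uVec m j) ∧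
      (j ∉ D → t = 0) := by
    intro j
    by_cases hj : j ∈ D
    · obtain ⟨t, h0, _, heq⟩ := mem_seg_iff.1 (hg hj)
      exact ⟨t, h0, fun _ => heq, fun h => absurd hj h⟩
    · exact ⟨0, le_refl _, fun h => absurd h hj, fun _ => rfl⟩
  choose t h0 h1 h2 using hch
  refine ⟨t, h0, h2, ?_⟩
  rw [← Finset.sum_subset (Finset.subset_univ D)
    (fun j _ hj => by rw [h2 j hj, zero_smul])]
  exact Finset.sum_congr rfl fun j hj => h1 j hj

lemma sdiff_ne_univ {S T : Finset (Fin (m + 1))} (hS : S.Nonempty) :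
    T \ S ≠ Finset.univ := by
  obtain ⟨j, hj⟩ := hS
  intro h
  have : j ∈ T \ S := h ▸ Finset.mem_univ j
  exact (Finset.mem_sdiff.1 this).2 hj

/-- translation parts agree -/
lemma trans_inj {D : Finset (Fin (m + 1))} (hD : D ≠ Finset.univ)
    {p p' : Fin m → ℝ}
    (h : ({p} : Set (Fin m → ℝ)) + segSum m D = {p'} + segSum m D) : p = p' := by
  have h1 : p ∈ ({p'} : Set (Fin m → ℝ)) + segSum m D := by
    rw [← h]
    have : (0 : Fin m → ℝ) ∈ segSum m D := by
      have := Set.finset_sum_mem_finset_sum D (fun j => segment ℝ 0 (uVec m j))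
        (fun _ => 0) (fun j _ => left_mem_segment ℝ 0 (uVec m j))
      simpa [segSum] using this
    simpa using Set.add_mem_add (Set.mem_singleton p) this
  have h2 : p' ∈ ({p} : Set (Fin m → ℝ)) + segSum m D := by
    rw [h]
    have : (0 : Fin m → ℝ) ∈ segSum m D := by
      have := Set.finset_sum_mem_finset_sum D (fun j => segment ℝ 0 (uVec m j))
        (fun _ => 0) (fun j _ => left_mem_segment ℝ 0 (uVec m j))
      simpa [segSum] using this
    simpa using Set.add_mem_add (Set.mem_singleton p') this
  obtain ⟨a1, ha1, k, hk, hpk⟩ := h1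
  obtain ⟨a2, ha2, k', hk', hp'k⟩ := h2
  rw [Set.mem_singleton_iff] at ha1 ha2
  obtain ⟨t, ht0, htD, htk⟩ := segSum_repr hk
  obtain ⟨s, hs0, hsD, hsk⟩ := segSum_repr hk'
  have e1 : p' + ∑ j, t j • uVec m j = p := by rw [← htk, ← ha1]; exact hpk
  have e2 : p + ∑ j, s j • uVec m j = p' := by rw [← hsk, ← ha2]; exact hp'k
  have hsum : ∑ j, (t j + s j) • uVec m j = 0 := by
    have h5 : p' + ((∑ j, t j • uVec m j) + ∑ j, s j • uVec m j) = p' + 0 := by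
      rw [← add_assoc, e1, e2, add_zero]
    have h6 := add_left_cancel h5
    simpa [add_smul, Finset.sum_add_distrib] using h6
  have hz : ∀ j, t j + s j = 0 :=
    dep_zero m D hD _ (fun j hj => by rw [htD j hj, hsD j hj, add_zero]) hsum
  have ht : ∀ j, t j = 0 := fun j => le_antisymm (by linarith [hs0 j, hz j]) (ht0 j)
  rw [← e1]
  simp [ht]

lemma indicator_sum (S : Finset (Fin (m + 1))) :
    ∑ j, (if j ∈ S then (1:ℝ) else 0) • uVec m j = ∑ j ∈ S, uVec m j := by
  rw [← Finset.sum_subset (Finset.subset_univ S)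
    (fun j _ hj => by rw [if_neg hj, zero_smul])]
  exact Finset.sum_congr rfl fun j hj => by rw [if_pos hj, one_smul]

lemma pt_inj {S S' : Finset (Fin (m + 1))} (hS : S ≠ Finset.univ)
    (hS' : S' ≠ Finset.univ)
    (h : ∑ j ∈ S, uVec m j = ∑ j ∈ S', uVec m j) : S = S' := by
  classical
  set c : Fin (m + 1) → ℝ :=
    fun j => (if j ∈ S then (1:ℝ) else 0) - (if j ∈ S' then (1:ℝ) else 0) with hc
  have hdep : ∑ j, c j • uVec m j = 0 := by
    simp only [hc, sub_smul, Finset.sum_sub_distrib, indicator_sum, h, sub_self]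
  obtain ⟨j1, hj1⟩ : ∃ j, j ∉ S := by
    by_contra hcon; push_neg at hcon; exact hS (Finset.eq_univ_iff_forall.2 hcon)
  obtain ⟨j2, hj2⟩ : ∃ j, j ∉ S' := by
    by_contra hcon; push_neg at hcon; exact hS' (Finset.eq_univ_iff_forall.2 hcon)
  have hconst : ∀ j k, c j = c k := fun j k => by
    rw [dep_const m c hdep j, ← dep_const m c hdep k]
  ext j
  constructor
  · intro hj
    by_contra hj'
    have h1 : c j = 1 := by simp [hc, hj, hj']
    have h2 : c j1 ≤ 0 := by
      by_cases h' : j1 ∈ S' <;> simp [hc, hj1, h']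
    rw [← hconst j j1, h1] at h2
    linarith
  · intro hj
    by_contra hj'
    have h1 : c j = -1 := by simp [hc, hj, hj']
    have h2 : 0 ≤ c j2 := by
      by_cases h' : j2 ∈ S <;> simp [hc, hj2, h']
    rw [← hconst j j2, h1] at h2
    linarith
lemma image_coe_eq_range (D : Finset (Fin (m + 1))) :
    uVec m '' ↑D = Set.range (fun j : D => uVec m j) := by
  ext z
  constructor
  · rintro ⟨j, hj, rfl⟩
    exact ⟨⟨j, hj⟩, rfl⟩
  · rintro ⟨⟨j, hj⟩, rfl⟩
    exact ⟨j, hj, rfl⟩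

lemma span_inj_sub {D D' : Finset (Fin (m + 1))} (hD' : D'.card < m)
    (h : Submodule.span ℝ (uVec m '' ↑D) ≤ Submodule.span ℝ (uVec m '' ↑D')) :
    D ⊆ D' := by
  classical
  intro j hj
  by_contra hjD'
  have hmem : uVec m j ∈ Submodule.span ℝ (uVec m '' ↑D') :=
    h (Submodule.subset_span ⟨j, hj, rfl⟩)
  rw [image_coe_eq_range, Submodule.mem_span_range_iff_exists_fun] at hmem
  obtain ⟨c, hc⟩ := hmem
  set c' : Fin (m + 1) → ℝ := fun k =>
    (if h : k ∈ D' then c ⟨k, h⟩ else 0) - (if k = j then 1 else 0) with hc'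
  have hEne : insert j D' ≠ Finset.univ := by
    intro hE
    have h1 : (insert j D').card ≤ D'.card + 1 := Finset.card_insert_le _ _
    have h2 : (insert j D').card = m + 1 := by rw [hE, Finset.card_univ, Fintype.card_fin]
    omega
  have hsum1 : ∑ k, (if h : k ∈ D' then c ⟨k, h⟩ else 0) • uVec m k = uVec m j := by
    rw [← hc,
      ← Finset.sum_subset (Finset.subset_univ D')
        (fun k _ hk => by rw [dif_neg hk, zero_smul]),
      ← Finset.sum_coe_sort D' (fun k => (if h : k ∈ D' then c ⟨k, h⟩ else 0) • uVec m k)]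
    apply Finset.sum_congr rfl
    intro k _
    simp [k.2]
  have hsum2 : ∑ k, (if k = j then (1:ℝ) else 0) • uVec m k = uVec m j := by
    rw [Finset.sum_eq_single j]
    · simp
    · intro k _ hk; simp [hk]
    · simp
  have hdep : ∑ k, c' k • uVec m k = 0 := by
    simp only [hc', sub_smul, Finset.sum_sub_distrib, hsum1, hsum2, sub_self]
  have hzero := dep_zero m (insert j D') hEne c'
    (fun k hk => by
      rw [Finset.mem_insert, not_or] at hk
      simp [hc', hk.1, hk.2]) hdep j
  simp [hc', hjD'] at hzero

lemma span_inj {D D' : Finset (Fin (m + 1))} (hD : D.card < m) (hD' : D'.card < m)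
    (h : Submodule.span ℝ (uVec m '' ↑D) = Submodule.span ℝ (uVec m '' ↑D')) :
    D = D' :=
  Finset.Subset.antisymm (span_inj_sub hD' h.le) (span_inj_sub hD h.ge)

lemma span_univ_top :
    Submodule.span ℝ (uVec m '' ↑(Finset.univ : Finset (Fin (m + 1)))) = ⊤ := by
  rw [eq_top_iff]
  intro x _
  have hx := pi_eq_sum_univ x
  have hsingle : ∀ k : Fin m, (fun j => if k = j then (1:ℝ) else 0) = Pi.single k 1 := by
    intro k
    funext j
    simp [Pi.single_apply, eq_comm]
  rw [hx]
  apply Submodule.sum_mem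
  intro k _
  apply Submodule.smul_mem
  apply Submodule.subset_span
  refine ⟨Fin.castSucc k, by simp, ?_⟩
  rw [uVec_castSucc, ← hsingle]

end G


lemma sign_to_sets {m : ℕ} (l : (Fin m → ℝ) →L[ℝ] ℝ) {S T : Finset (Fin (m + 1))}
    (hST : S ⊆ T)
    (h1 : ∀ j ∈ S, 0 < l (uVec m j)) (h2 : ∀ j ∈ T \ S, l (uVec m j) = 0)
    (h3 : ∀ j ∉ T, l (uVec m j) < 0) : posS l = S ∧ nnT l = T := by
  constructor
  · ext j
    rw [mem_posS]
    constructor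
    · intro hpos
      by_contra hj
      by_cases hjT : j ∈ T
      · rw [h2 j (Finset.mem_sdiff.2 ⟨hjT, hj⟩)] at hpos
        exact lt_irrefl 0 hpos
      · linarith [h3 j hjT]
    · exact h1 j
  · ext j
    rw [mem_nnT]
    constructor
    · intro hge
      by_contra hj
      linarith [h3 j hj]
    · intro hjT
      by_cases hjS : j ∈ S
      · exact (h1 j hjS).le
      · rw [h2 j (Finset.mem_sdiff.2 ⟨hjT, hjS⟩)]

/-- for each `0 ≤ i < n-1`, the map `(S,T) ↦ Σ_{j∈S} u_j + Σ_{j∈T∖S} [0,u_j]`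
is a bijection between pairs `∅ ⊊ S ⊆ T ⊊ [n]` with `|T∖S| = i` and the `i`-dimensional
faces of `P_{n-1}` (with `n = m+1`). -/
theorem faces_of_P_bijection (m : ℕ) (hm : 1 ≤ m) (i : ℕ) (hi : i < m) :
    (∀ S T : Finset (Fin (m + 1)), S.Nonempty → S ⊆ T → T ≠ Finset.univ →
        (T \ S).card = i →
      (faceOf m S T).Nonempty ∧ IsExposed ℝ (Pzono m) (faceOf m S T) ∧
        Module.finrank ℝ (affineSpan ℝ (faceOf m S T)).direction = i) ∧
    (∀ S T S' T' : Finset (Fin (m + 1)),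
        S.Nonempty → S ⊆ T → T ≠ Finset.univ → (T \ S).card = i →
        S'.Nonempty → S' ⊆ T' → T' ≠ Finset.univ → (T' \ S').card = i →
        faceOf m S T = faceOf m S' T' → S = S' ∧ T = T') ∧
    (∀ F : Set (Fin m → ℝ), F.Nonempty → IsExposed ℝ (Pzono m) F →
        Module.finrank ℝ (affineSpan ℝ F).direction = i →
      ∃ S T : Finset (Fin (m + 1)), S.Nonempty ∧ S ⊆ T ∧ T ≠ Finset.univ ∧
        (T \ S).card = i ∧ F = faceOf m S T) := by
  refine ⟨?_, ?_, ?_⟩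
  · -- Part 1
    intro S T hS hST hT hcard
    obtain ⟨l, hsgn1, hsgn2, hsgn3⟩ := exists_functl S T hS hST hT
    obtain ⟨hPS, hNT⟩ := sign_to_sets l hST hsgn1 hsgn2 hsgn3
    refine ⟨faceOf_nonempty m S T, ?_, ?_⟩
    · intro _
      have hkey := exposed_face_eq l
      rw [hPS, hNT] at hkey
      exact ⟨l, hkey.symm⟩
    · rw [direction_affineSpan, faceOf_eq, vectorSpan_face,
        finrank_face m _ (sdiff_ne_univ hS), hcard]
  · -- Part 2
    intro S T S' T' hS hST hT hcard hS' hST' hT' hcard' heq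
    have hvs := congrArg (vectorSpan ℝ) heq
    rw [faceOf_eq, faceOf_eq, vectorSpan_face, vectorSpan_face] at hvs
    have hDD : T \ S = T' \ S' :=
      span_inj (by rw [hcard]; exact hi) (by rw [hcard']; exact hi) hvs
    have heq2 := heq
    rw [faceOf_eq, faceOf_eq, hDD] at heq2
    have hpt : ∑ j ∈ S, uVec m j = ∑ j ∈ S', uVec m j :=
      trans_inj (sdiff_ne_univ hS') heq2
    have hSuniv : S ≠ Finset.univ := fun h => hT (Finset.univ_subset_iff.1 (h ▸ hST))
    have hSuniv' : S' ≠ Finset.univ := fun h => hT' (Finset.univ_subset_iff.1 (h ▸ hST'))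
    have hSS : S = S' := pt_inj hSuniv hSuniv' hpt
    refine ⟨hSS, ?_⟩
    subst hSS
    rw [← Finset.union_sdiff_of_subset hST, ← Finset.union_sdiff_of_subset hST', hDD]
  · -- Part 3
    intro F hFne hFexp hFdim
    obtain ⟨l, hl⟩ := hFexp hFne
    have hF : F = faceOf m (posS l) (nnT l) := by rw [hl, exposed_face_eq]
    have hnz : ∃ j, l (uVec m j) ≠ 0 := by
      by_contra hcon
      push_neg at hcon
      have h1 : posS l = ∅ := by
        ext j
        simp [mem_posS, hcon]
      have h2 : nnT l = Finset.univ := by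
        ext j
        simp [mem_nnT, hcon]
      have hdm : Module.finrank ℝ (affineSpan ℝ F).direction = m := by
        rw [hF, h1, h2, direction_affineSpan, faceOf_eq, vectorSpan_face,
          Finset.sdiff_empty, span_univ_top, finrank_top, Module.finrank_fin_fun]
      omega
    have hsum0 : ∑ j, l (uVec m j) = 0 := by
      rw [← map_sum, sum_uVec, map_zero]
    have hSne : (posS l).Nonempty := by
      rw [Finset.nonempty_iff_ne_empty]
      intro hempty
      have hall : ∀ j, l (uVec m j) ≤ 0 := by
        intro j
        by_contra hpos
        push_neg at hpos
        have : j ∈ posS l := (mem_posS l).2 hpos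
        rw [hempty] at this
        exact absurd this (Finset.notMem_empty j)
      obtain ⟨j, hj⟩ := hnz
      exact hj ((Finset.sum_eq_zero_iff_of_nonpos (fun j _ => hall j)).1 hsum0 j
        (Finset.mem_univ j))
    have hTne : nnT l ≠ Finset.univ := by
      intro huniv
      have hall : ∀ j, 0 ≤ l (uVec m j) := fun j =>
        (mem_nnT l).1 (huniv ▸ Finset.mem_univ j)
      obtain ⟨j, hj⟩ := hnz
      exact hj ((Finset.sum_eq_zero_iff_of_nonneg (fun j _ => hall j)).1 hsum0 j
        (Finset.mem_univ j))
    refine ⟨posS l, nnT l, hSne, posS_subset_nnT l, hTne, ?_, hF⟩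
    have hdim : Module.finrank ℝ (affineSpan ℝ F).direction = (nnT l \ posS l).card := by
      rw [hF, direction_affineSpan, faceOf_eq, vectorSpan_face,
        finrank_face m _ (sdiff_ne_univ hSne)]
    rw [← hFdim, hdim]
end
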